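/- arXiv:2407.13884 — 3 statements merged into one kernel-verified Lean document; each statement's English description precedes it below -/
import Mathlib

section
/- Let $0 < \alpha < \beta \le n$. Then every function of bounded $\alpha$-dimensional mean oscillation on $\mathbb{R}^n$ is of bounded $\beta$-dimensional mean oscillation, i.e. $BMO^\alpha(\mathbb{R}^n) \subset BMO^\beta(\mathbb{R}^n)$, with the quasi-norm inequality $\|u\|_{BMO^\beta} \le C(\alpha,\beta,n)\,\|u\|_{BMO^\alpha}$. -/
open MeasureTheory Metric Set Filter
open scoped ENNReal NNReal Topology

noncomputable section

/-- Euclidean space ℝⁿ. -/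
abbrev Rn (n : ℕ) := EuclideanSpace ℝ (Fin n)

/-- The normalization constant ω_β = π^(β/2)/Γ(β/2+1). -/
noncomputable def omegaC (β : ℝ) : ℝ := Real.pi ^ (β / 2) / Real.Gamma (β / 2 + 1)

/-- β-dimensional Hausdorff content on ℝⁿ. -/
noncomputable def hCont (n : ℕ) (β : ℝ) (E : Set (Rn n)) : ℝ≥0∞ :=
  ⨅ (x : ℕ → Rn n) (r : ℕ → ℝ) (_ : E ⊆ ⋃ i, ball (x i) (r i)),
    ∑' i, ENNReal.ofReal (omegaC β * r i ^ β)

/-- Choquet integral of an ℝ≥0∞-valued function over a set `A`, with respect to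
the β-dimensional Hausdorff content (layer-cake formula). -/
noncomputable def choqE (n : ℕ) (β : ℝ) (A : Set (Rn n)) (f : Rn n → ℝ≥0∞) : ℝ≥0∞ :=
  ∫⁻ t in Ioi (0 : ℝ), hCont n β {x ∈ A | ENNReal.ofReal t < f x}

/-- Choquet integral of |f| for a real-valued `f`. -/
noncomputable def choq (n : ℕ) (β : ℝ) (A : Set (Rn n)) (f : Rn n → ℝ) : ℝ≥0∞ :=
  choqE n β A fun x => ENNReal.ofReal |f x|

/-- The open cube with center `z` and side length `l`. -/
def cube {n : ℕ} (z : Rn n) (l : ℝ) : Set (Rn n) := {x | ∀ i, |x i - z i| < l / 2}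

/-- The BMO^β quasi-norm on ℝⁿ. -/
noncomputable def bmoNorm (n : ℕ) (β : ℝ) (u : Rn n → ℝ) : ℝ≥0∞ :=
  ⨆ (z : Rn n) (l : ℝ) (_ : 0 < l),
    ⨅ c : ℝ, (ENNReal.ofReal (l ^ β))⁻¹ * choq n β (cube z l) (fun x => u x - c)

/-- The BMO^β quasi-norm on an open set Ω (cubes Q with 2Q ⊆ Ω). -/
noncomputable def bmoNormOn (n : ℕ) (β : ℝ) (Ω : Set (Rn n)) (u : Rn n → ℝ) : ℝ≥0∞ :=
  ⨆ (z : Rn n) (l : ℝ) (_ : 0 < l ∧ cube z (2 * l) ⊆ Ω),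
    ⨅ c : ℝ, (ENNReal.ofReal (l ^ β))⁻¹ * choq n β (cube z l) (fun x => u x - c)

open Classical in
/-- The precise representative of a locally integrable function. -/
noncomputable def preciseRep {n : ℕ} (u : Rn n → ℝ) (x : Rn n) : ℝ :=
  if h : ∃ L : ℝ, Tendsto (fun r : ℝ => ⨍ y in ball x r, u y) (𝓝[>] 0) (𝓝 L)
  then h.choose else 0

/-- `g` is the (distributional) weak gradient of `u` on the open set `Ω`. -/
def IsWeakGrad (n : ℕ) (Ω : Set (Rn n)) (u : Rn n → ℝ) (g : Rn n → Rn n) : Prop :=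
  ∀ φ : Rn n → ℝ, ContDiff ℝ (⊤ : ℕ∞) φ → HasCompactSupport φ → tsupport φ ⊆ Ω →
    ∀ i : Fin n, ∫ x in Ω, u x * fderiv ℝ φ x (EuclideanSpace.single i 1) =
      - ∫ x in Ω, g x i * φ x

/-- weak-L^p (Marcinkiewicz) quasi-norm of a vector field on A. -/
noncomputable def weakNorm {n : ℕ} (p : ℝ) (A : Set (Rn n)) (g : Rn n → Rn n) : ℝ≥0∞ :=
  ⨆ (t : ℝ) (_ : 0 < t), ENNReal.ofReal t * (volume {x ∈ A | t < ‖g x‖}) ^ (1 / p)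

/-- Morrey norm of exponent β of a locally integrable function on Ω. -/
noncomputable def morreyNorm (n : ℕ) (β : ℝ) (Ω : Set (Rn n)) (f : Rn n → ℝ) : ℝ≥0∞ :=
  ⨆ (x : Rn n) (r : ℝ) (_ : 0 < r),
    (ENNReal.ofReal (r ^ β))⁻¹ * ∫⁻ y in Ω ∩ ball x r, ENNReal.ofReal |f y|


lemma omegaC_pos {β : ℝ} (hβ : 0 < β) : 0 < omegaC β := by
  have h1 : 0 < Real.Gamma (β / 2 + 1) := Real.Gamma_pos_of_pos (by linarith)
  have h2 : (0:ℝ) < Real.pi ^ (β / 2) := Real.rpow_pos_of_pos Real.pi_pos _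
  exact div_pos h2 h1

lemma hCont_le_of_subset_ball (n : ℕ) {α β : ℝ} (hα : 0 < α) (hαβ : α < β)
    {E : Set (Rn n)} {z : Rn n} {R : ℝ} (hR : 0 < R) (hE : E ⊆ ball z R) :
    hCont n β E ≤ ENNReal.ofReal (omegaC β / omegaC α * R ^ (β - α)) * hCont n α E := by
  have hωα := omegaC_pos hα
  have hωβ := omegaC_pos (hα.trans hαβ)
  have hC : 0 < omegaC β / omegaC α * R ^ (β - α) :=
    mul_pos (div_pos hωβ hωα) (Real.rpow_pos_of_pos hR _)
  simp only [hCont]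
  simp_rw [ENNReal.mul_iInf_of_ne (by simpa using hC) ENNReal.ofReal_ne_top]
  refine le_iInf fun x => le_iInf fun r => le_iInf fun hcov => ?_
  set x' : ℕ → Rn n := fun i => if R < r i then z else x i with hx'
  set r' : ℕ → ℝ := fun i => if r i ≤ 0 then 0 else min (r i) R with hr'
  have hcov' : E ⊆ ⋃ i, ball (x' i) (r' i) := by
    intro e he
    obtain ⟨i, hi⟩ := mem_iUnion.1 (hcov he)
    have hri : 0 < r i := lt_of_le_of_lt dist_nonneg (mem_ball.1 hi)
    refine mem_iUnion.2 ⟨i, ?_⟩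
    simp only [hx', hr', if_neg (not_le.2 hri)]
    by_cases h : R < r i
    · rw [if_pos h, min_eq_right h.le]
      exact hE he
    · rw [if_neg h, min_eq_left (not_lt.1 h)]
      exact hi
  refine le_trans (iInf_le_of_le x' (iInf_le_of_le r' (iInf_le_of_le hcov' le_rfl))) ?_
  rw [← ENNReal.tsum_mul_left]
  refine ENNReal.tsum_le_tsum fun i => ?_
  rcases le_or_gt (r i) 0 with h0 | h0
  · simp only [hr', if_pos h0, Real.zero_rpow (by linarith : β ≠ 0), mul_zero,
      ENNReal.ofReal_zero]
    exact zero_le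
  · simp only [hr', if_neg (not_le.2 h0)]
    rw [← ENNReal.ofReal_mul hC.le]
    refine ENNReal.ofReal_le_ofReal ?_
    have hm : 0 < min (r i) R := lt_min h0 hR
    have key : min (r i) R ^ β ≤ r i ^ α * R ^ (β - α) := by
      have : min (r i) R ^ β = min (r i) R ^ α * min (r i) R ^ (β - α) := by
        rw [← Real.rpow_add hm]; ring_nf
      rw [this]
      exact mul_le_mul (Real.rpow_le_rpow hm.le (min_le_left _ _) hα.le)
        (Real.rpow_le_rpow hm.le (min_le_right _ _) (by linarith))
        (Real.rpow_nonneg hm.le _) (Real.rpow_nonneg h0.le _)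
    calc omegaC β * min (r i) R ^ β ≤ omegaC β * (r i ^ α * R ^ (β - α)) :=
          mul_le_mul_of_nonneg_left key hωβ.le
      _ = omegaC β / omegaC α * R ^ (β - α) * (omegaC α * r i ^ α) := by
          field_simp

lemma cube_subset_ball {n : ℕ} (hn : 0 < n) {z : Rn n} {l : ℝ} (hl : 0 < l) :
    cube z l ⊆ ball z (l * Real.sqrt n) := by
  intro y hy
  have hsn : (0:ℝ) < Real.sqrt n := Real.sqrt_pos.2 (by exact_mod_cast hn)
  rw [mem_ball, EuclideanSpace.dist_eq]
  have hb : ∑ i, dist (y i) (z i) ^ 2 ≤ (n : ℝ) * (l / 2) ^ 2 := by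
    calc ∑ i, dist (y i) (z i) ^ 2 ≤ ∑ _i : Fin n, (l / 2) ^ 2 := by
          refine Finset.sum_le_sum fun i _ => ?_
          have := (hy i).le
          have h2 : dist (y i) (z i) ≤ l / 2 := by
            rw [Real.dist_eq]; exact this
          exact pow_le_pow_left₀ dist_nonneg h2 2
      _ = (n : ℝ) * (l / 2) ^ 2 := by simp [mul_comm]
  calc Real.sqrt (∑ i, dist (y i) (z i) ^ 2) ≤ Real.sqrt ((n : ℝ) * (l / 2) ^ 2) :=
        Real.sqrt_le_sqrt hb
    _ = Real.sqrt n * (l / 2) := by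
        rw [Real.sqrt_mul (Nat.cast_nonneg n), Real.sqrt_sq (by linarith)]
    _ < l * Real.sqrt n := by
        rw [mul_comm]
        exact mul_lt_mul_of_pos_right (by linarith) hsn

lemma choq_cube_le (n : ℕ) (hn : 0 < n) {α β : ℝ} (hα : 0 < α) (hαβ : α < β)
    (z : Rn n) {l : ℝ} (hl : 0 < l) (f : Rn n → ℝ) :
    choq n β (cube z l) f ≤
      ENNReal.ofReal (omegaC β / omegaC α * (l * Real.sqrt n) ^ (β - α)) *
        choq n α (cube z l) f := by
  have hR : 0 < l * Real.sqrt n := mul_pos hl (Real.sqrt_pos.2 (by exact_mod_cast hn))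
  rw [choq, choq, choqE, choqE, ← lintegral_const_mul' _ _ ENNReal.ofReal_ne_top]
  exact lintegral_mono fun t =>
    hCont_le_of_subset_ball n hα hαβ hR ((sep_subset _ _).trans (cube_subset_ball hn hl))

/-- For 0 < α < β ≤ n, BMO^α(ℝⁿ) ⊂ BMO^β(ℝⁿ) with the quasi-norm
inequality ‖u‖_{BMO^β} ≤ C(α,β,n) ‖u‖_{BMO^α}. -/
theorem bmo_alpha_subset_bmo_beta (n : ℕ) (α β : ℝ) (hα : 0 < α) (hαβ : α < β)
    (hβn : β ≤ (n : ℝ)) :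
    ∃ C : ℝ, 0 < C ∧ ∀ u : Rn n → ℝ,
      bmoNorm n β u ≤ ENNReal.ofReal C * bmoNorm n α u := by
  have hn : 0 < n := by
    by_contra h
    push_neg at h
    interval_cases n
    simp only [Nat.cast_zero] at hβn
    linarith
  have hωα := omegaC_pos hα
  have hωβ := omegaC_pos (hα.trans hαβ)
  have hsn : (0:ℝ) < Real.sqrt n := Real.sqrt_pos.2 (by exact_mod_cast hn)
  set C : ℝ := omegaC β / omegaC α * Real.sqrt n ^ (β - α) with hCdef
  have hC : 0 < C := mul_pos (div_pos hωβ hωα) (Real.rpow_pos_of_pos hsn _)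
  refine ⟨C, hC, fun u => ?_⟩
  rw [bmoNorm]
  refine iSup_le fun z => iSup_le fun l => iSup_le fun hl => ?_
  have hsup : (⨅ c : ℝ, (ENNReal.ofReal (l ^ α))⁻¹ * choq n α (cube z l) (fun x => u x - c)) ≤
      bmoNorm n α u := le_iSup_of_le z (le_iSup_of_le l (le_iSup_of_le hl le_rfl))
  refine le_trans ?_ (mul_le_mul_right hsup _)
  rw [ENNReal.mul_iInf_of_ne (by simpa using hC) ENNReal.ofReal_ne_top]
  refine iInf_mono fun c => ?_
  have h1 := choq_cube_le n hn hα hαβ z hl (fun x => u x - c)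
  have hcc : omegaC β / omegaC α * (l * Real.sqrt n) ^ (β - α) = C * l ^ (β - α) := by
    rw [Real.mul_rpow hl.le (Real.sqrt_nonneg _), hCdef]; ring
  rw [hcc] at h1
  calc (ENNReal.ofReal (l ^ β))⁻¹ * choq n β (cube z l) (fun x => u x - c)
      ≤ (ENNReal.ofReal (l ^ β))⁻¹ *
        (ENNReal.ofReal (C * l ^ (β - α)) * choq n α (cube z l) (fun x => u x - c)) :=
        mul_le_mul_right h1 _
    _ = ENNReal.ofReal C * ((ENNReal.ofReal (l ^ α))⁻¹ *
          choq n α (cube z l) (fun x => u x - c)) := by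
        have hlβ : l ^ β = l ^ α * l ^ (β - α) := by rw [← Real.rpow_add hl]; ring_nf
        have hb0 : ENNReal.ofReal (l ^ (β - α)) ≠ 0 := by
          simpa using Real.rpow_pos_of_pos hl _
        have ha0 : ENNReal.ofReal (l ^ α) ≠ 0 := by
          simpa using Real.rpow_pos_of_pos hl _
        rw [hlβ, ENNReal.ofReal_mul (Real.rpow_nonneg hl.le _),
          ENNReal.ofReal_mul hC.le,
          ENNReal.mul_inv (Or.inl ha0) (Or.inr hb0)]
        rw [show (ENNReal.ofReal (l ^ α))⁻¹ * (ENNReal.ofReal (l ^ (β - α)))⁻¹ *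
            (ENNReal.ofReal C * ENNReal.ofReal (l ^ (β - α)) *
              choq n α (cube z l) fun x => u x - c) =
            (ENNReal.ofReal (l ^ (β - α)) * (ENNReal.ofReal (l ^ (β - α)))⁻¹) *
            (ENNReal.ofReal C * ((ENNReal.ofReal (l ^ α))⁻¹ *
              choq n α (cube z l) fun x => u x - c)) from by ring,
          ENNReal.mul_inv_cancel hb0 ENNReal.ofReal_ne_top, one_mul]
end
end

section
/- (Fatou's lemma for Choquet integrals with respect to Hausdorff content) Let $0 < \beta \le n$ and $(f_m)$ a sequence of nonnegative functions on $\mathbb{R}^n$. Then $\int \liminf_{m\to\infty} f_m\, d\mathcal{H}^\beta_\infty \le \liminf_{m\to\infty} \int f_m\, d\mathcal{H}^\beta_\infty$. -/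
open MeasureTheory Metric Set Filter
open scoped ENNReal NNReal Topology

noncomputable section

namespace CF

lemma omegaC_pos {β : ℝ} (hβ : 0 < β) : 0 < omegaC β := by
  have h1 : 0 < Real.pi ^ (β / 2) := Real.rpow_pos_of_pos Real.pi_pos _
  have h2 : 0 < Real.Gamma (β / 2 + 1) := Real.Gamma_pos_of_pos (by linarith)
  exact div_pos h1 h2

/-- the ball gauge -/
noncomputable def mg (n : ℕ) (β : ℝ) (s : Set (Rn n)) : ℝ≥0∞ :=
  ⨅ (x : Rn n) (r : ℝ) (_ : s ⊆ ball x r), ENNReal.ofReal (omegaC β * r ^ β)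

lemma mg_le {n : ℕ} {β : ℝ} {s : Set (Rn n)} {x : Rn n} {r : ℝ} (h : s ⊆ ball x r) :
    mg n β s ≤ ENNReal.ofReal (omegaC β * r ^ β) :=
  iInf_le_of_le x (iInf_le_of_le r (iInf_le_of_le h le_rfl))

lemma mg_mono {n : ℕ} {β : ℝ} {s t : Set (Rn n)} (h : s ⊆ t) : mg n β s ≤ mg n β t := by
  refine le_iInf fun x => le_iInf fun r => le_iInf fun hc => mg_le (h.trans hc)

lemma mg_closure {n : ℕ} {β : ℝ} (s : Set (Rn n)) : mg n β (closure s) = mg n β s := by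
  refine le_antisymm ?_ (mg_mono subset_closure)
  refine le_iInf fun x => le_iInf fun r => le_iInf fun hc => ?_
  rcases le_or_gt r 0 with hr | hr
  · have : s = ∅ := by
      have : ball x r = ∅ := ball_eq_empty.2 hr
      simpa [this, subset_empty_iff] using hc
    subst this
    simpa using mg_le (x := x) (r := r) (by simp)
  · -- closure s ⊆ ball x r' for every r' > r
    have hcl : ∀ r' : ℝ, r < r' → closure s ⊆ ball x r' := fun r' hr' =>
      (closure_mono hc).trans <| (closure_ball_subset_closedBall).trans
        (closedBall_subset_ball hr')
    have htend : Tendsto (fun r' : ℝ => ENNReal.ofReal (omegaC β * r' ^ β)) (𝓝[>] r)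
        (𝓝 (ENNReal.ofReal (omegaC β * r ^ β))) := by
      apply (ENNReal.continuous_ofReal.tendsto _).comp
      apply Tendsto.mono_left _ nhdsWithin_le_nhds
      exact (tendsto_const_nhds.mul ((Real.continuousAt_rpow_const r β
        (Or.inl hr.ne')).tendsto))
    refine ge_of_tendsto htend ?_
    filter_upwards [self_mem_nhdsWithin] with r' hr'
    exact mg_le (hcl r' hr')

/-- ball-gauge Hausdorff-type measure -/
noncomputable def muB (n : ℕ) (β : ℝ) : Measure (Rn n) := Measure.mkMetric' (mg n β)

lemma muB_apply (n : ℕ) (β : ℝ) (s : Set (Rn n)) :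
    muB n β s = OuterMeasure.mkMetric' (mg n β) s := by
  have htrim : (OuterMeasure.mkMetric' (mg n β)).trim = OuterMeasure.mkMetric' (mg n β) := by
    rw [OuterMeasure.mkMetric'.eq_iSup_nat, OuterMeasure.trim_iSup]
    congr 1 with k : 1
    exact OuterMeasure.mkMetric'.trim_pre _ (fun s => mg_closure s) _
  calc muB n β s = (muB n β).toOuterMeasure s := by rw [Measure.coe_toOuterMeasure]
  _ = (OuterMeasure.mkMetric' (mg n β)).trim s := by
        rw [muB, Measure.mkMetric'_toOuterMeasure]
  _ = _ := by rw [htrim]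


lemma hCont_le_of_cover {n : ℕ} {β : ℝ} {E : Set (Rn n)} (x : ℕ → Rn n) (r : ℕ → ℝ)
    (h : E ⊆ ⋃ i, ball (x i) (r i)) :
    hCont n β E ≤ ∑' i, ENNReal.ofReal (omegaC β * r i ^ β) :=
  iInf_le_of_le x (iInf_le_of_le r (iInf_le_of_le h le_rfl))

lemma hCont_mono {n : ℕ} {β : ℝ} {E F : Set (Rn n)} (h : E ⊆ F) :
    hCont n β E ≤ hCont n β F := by
  refine le_iInf fun x => le_iInf fun r => le_iInf fun hc => hCont_le_of_cover x r (h.trans hc)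

lemma hCont_exists_cover {n : ℕ} {β : ℝ} {E : Set (Rn n)} (h : hCont n β E ≠ ∞)
    {δ : ℝ≥0∞} (hδ : 0 < δ) :
    ∃ (x : ℕ → Rn n) (r : ℕ → ℝ), (E ⊆ ⋃ i, ball (x i) (r i)) ∧
      ∑' i, ENNReal.ofReal (omegaC β * r i ^ β) ≤ hCont n β E + δ := by
  have hlt : hCont n β E < hCont n β E + δ := ENNReal.lt_add_right h hδ.ne'
  conv_lhs at hlt => rw [hCont]
  simp only [iInf_lt_iff] at hlt
  obtain ⟨x, r, hc, hlt⟩ := hlt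
  exact ⟨x, r, hc, hlt.le⟩

lemma mg_exists {n : ℕ} {β : ℝ} {s : Set (Rn n)} (h : mg n β s ≠ ∞) {δ : ℝ≥0∞} (hδ : 0 < δ) :
    ∃ (x : Rn n) (r : ℝ), s ⊆ ball x r ∧
      ENNReal.ofReal (omegaC β * r ^ β) ≤ mg n β s + δ := by
  have hlt : mg n β s < mg n β s + δ := ENNReal.lt_add_right h hδ.ne'
  conv_lhs at hlt => rw [mg]
  simp only [iInf_lt_iff] at hlt
  obtain ⟨x, r, hc, hlt⟩ := hlt
  exact ⟨x, r, hc, hlt.le⟩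

lemma zero_cost {β : ℝ} (hβ : 0 < β) :
    ENNReal.ofReal (omegaC β * (0:ℝ) ^ β) = 0 := by
  rw [Real.zero_rpow hβ.ne', mul_zero, ENNReal.ofReal_zero]

/-- F1: hCont is at most the ball-gauge (pre) outer measure. -/
lemma hCont_le_pre {n : ℕ} {β : ℝ} (hβ : 0 < β) (E : Set (Rn n)) :
    hCont n β E ≤ OuterMeasure.mkMetric'.pre (mg n β) 1 E := by
  rw [OuterMeasure.mkMetric'.pre, OuterMeasure.boundedBy_apply]
  refine le_iInf₂ fun t hcov => ?_
  set c : ℕ → ℝ≥0∞ := fun i =>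
    ⨆ (_ : (t i).Nonempty),
      MeasureTheory.extend (fun s (_ : EMetric.diam s ≤ 1) => mg n β s) (t i) with hc
  by_cases htop : ∑' i, c i = ∞
  · exact le_of_le_of_eq le_top htop.symm
  refine ENNReal.le_of_forall_pos_le_add fun ε hε _ => ?_
  obtain ⟨δ, hδpos, hδsum⟩ := ENNReal.exists_pos_sum_of_countable
    (ENNReal.coe_ne_zero.2 hε.ne') ℕ
  have key : ∀ i, ∃ (x : Rn n) (r : ℝ), (t i ⊆ ball x r) ∧
      ENNReal.ofReal (omegaC β * r ^ β) ≤ c i + δ i := by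
    intro i
    rcases eq_empty_or_nonempty (t i) with he | hne
    · refine ⟨(0 : Rn n), 0, ?_, ?_⟩
      · rw [he]; exact empty_subset _
      · rw [zero_cost hβ]; exact zero_le
    · have hci : c i = MeasureTheory.extend
          (fun s (_ : EMetric.diam s ≤ 1) => mg n β s) (t i) := by
        simp only [hc, iSup_pos hne]
      have hcfin : c i ≠ ∞ := ne_top_of_le_ne_top htop (ENNReal.le_tsum i)
      have hmgle : mg n β (t i) ≤ c i := by
        rw [hci]
        by_cases hd : EMetric.diam (t i) ≤ 1
        · exact le_of_eq (MeasureTheory.extend_eq (fun s (_ : EMetric.diam s ≤ 1) => mg n β s) hd).symm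
        · rw [MeasureTheory.extend_eq_top (fun s _ => mg n β s) hd]; exact le_top
      have hmgfin : mg n β (t i) ≠ ∞ := ne_top_of_le_ne_top hcfin hmgle
      obtain ⟨x, r, hsub, hcost⟩ := mg_exists hmgfin
        (δ := (δ i : ℝ≥0∞)) (by exact_mod_cast hδpos i)
      exact ⟨x, r, hsub, hcost.trans (add_le_add hmgle le_rfl)⟩
  choose x r hsub hcost using key
  have hEc : E ⊆ ⋃ i, ball (x i) (r i) :=
    hcov.trans (iUnion_mono fun i => hsub i)
  calc hCont n β E ≤ ∑' i, ENNReal.ofReal (omegaC β * r i ^ β) :=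
        hCont_le_of_cover x r hEc
  _ ≤ ∑' i, (c i + (δ i : ℝ≥0∞)) := ENNReal.tsum_le_tsum hcost
  _ = (∑' i, c i) + ∑' i, (δ i : ℝ≥0∞) := ENNReal.tsum_add
  _ ≤ (∑' i, c i) + ε := add_le_add le_rfl hδsum.le



lemma hCont_le_muB {n : ℕ} {β : ℝ} (hβ : 0 < β) (E : Set (Rn n)) :
    hCont n β E ≤ muB n β E := by
  rw [muB_apply]
  refine (hCont_le_pre hβ E).trans ?_
  have : OuterMeasure.mkMetric'.pre (mg n β) 1 ≤ OuterMeasure.mkMetric' (mg n β) :=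
    le_iSup₂_of_le 1 one_pos le_rfl
  exact this E


/-- Candidate grid balls: (scale index, integer center coordinates). -/
def Cand (n : ℕ) : Type := ℤ × (Fin n → ℤ)

instance (n : ℕ) : MeasurableSpace (Cand n) := ⊤
instance (n : ℕ) : Countable (Cand n) := inferInstanceAs (Countable (ℤ × (Fin n → ℤ)))

lemma cand_measurable {n : ℕ} (s : Set (Cand n)) : MeasurableSet s := trivial

/-- grid spacing at scale j -/
def spc (n : ℕ) (L : ℝ) (j : ℤ) : ℝ := L ^ j * (L - 1) / (n + 1)

def cCenter (n : ℕ) (L : ℝ) (b : Cand n) : Rn n :=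
  (WithLp.equiv 2 (Fin n → ℝ)).symm fun i => (b.2 i : ℝ) * spc n L b.1

def cRad (L : ℝ) {n : ℕ} (b : Cand n) : ℝ := L ^ (b.1 + 1)

def cBall (n : ℕ) (L : ℝ) (b : Cand n) : Set (Rn n) := ball (cCenter n L b) (cRad L b)

noncomputable def ccost (β L : ℝ) {n : ℕ} (b : Cand n) : ℝ≥0∞ :=
  ENNReal.ofReal (omegaC β * cRad L b ^ β)

/-- the mass measure on candidates -/
noncomputable def kap (n : ℕ) (β L : ℝ) : Measure (Cand n) :=
  Measure.sum fun b => ccost β L b • Measure.dirac b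

lemma kap_apply (n : ℕ) (β L : ℝ) (C : Set (Cand n)) :
    kap n β L C = ∑' b : Cand n, C.indicator (ccost β L) b := by
  rw [kap, Measure.sum_apply _ (cand_measurable C)]
  congr 1 with b
  rw [Measure.smul_apply, Measure.dirac_apply' _ (cand_measurable C), smul_eq_mul]
  by_cases hb : b ∈ C <;> simp [hb]

lemma kap_singleton (n : ℕ) (β L : ℝ) (b : Cand n) : kap n β L {b} = ccost β L b := by
  rw [kap_apply]
  rw [tsum_eq_single b]
  · simp
  · intro b' hb'
    simp [Set.indicator_of_notMem, hb']

lemma spc_pos {n : ℕ} {L : ℝ} (hL : 1 < L) (j : ℤ) : 0 < spc n L j := by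
  have hL0 : (0:ℝ) < L := by linarith
  have : (0:ℝ) < (n:ℝ) + 1 := by positivity
  exact div_pos (mul_pos (zpow_pos hL0 j) (by linarith)) this

lemma cRad_pos {n : ℕ} {L : ℝ} (hL : 1 < L) (b : Cand n) : 0 < cRad L b :=
  zpow_pos (by linarith) _

/-- Rounding: any ball fits in a candidate ball of comparable cost. -/
lemma exists_round {n : ℕ} {β L : ℝ} (hL : 1 < L) (hβ : 0 < β) {x : Rn n} {r : ℝ}
    (hr : 0 < r) :
    ∃ b : Cand n, ball x r ⊆ cBall n L b ∧
      ccost β L b ≤ ENNReal.ofReal (L ^ (2*β)) * ENNReal.ofReal (omegaC β * r ^ β) := by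
  have hL0 : (0:ℝ) < L := by linarith
  obtain ⟨j₀, hj1, hj2⟩ := exists_mem_Ioc_zpow hr hL
  set j : ℤ := j₀ + 1 with hjdef
  have hrle : r ≤ L ^ j := hj2
  have hrlt : L ^ (j - 1) < r := by
    simpa [hjdef] using hj1
  set s : ℝ := spc n L j with hs
  have hspos : 0 < s := spc_pos hL j
  set z : Fin n → ℤ := fun i => round (x i / s) with hz
  refine ⟨(j, z), ?_, ?_⟩
  · -- inclusion
    have hdistxc : dist x (cCenter n L (j, z)) ≤ (n+1) * (s/2) := by
      rw [EuclideanSpace.dist_eq]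
      have hcoord : ∀ i, dist (x i) ((cCenter n L (j, z)) i) ≤ s / 2 := by
        intro i
        have : (cCenter n L (j, z)) i = (z i : ℝ) * s := rfl
        rw [this, Real.dist_eq, hz]
        have h1 : |x i / s - round (x i / s)| ≤ 1/2 := abs_sub_round _
        have : x i - (round (x i / s) : ℝ) * s = (x i / s - round (x i / s)) * s := by
          rw [sub_mul, div_mul_cancel₀ _ hspos.ne']
        rw [this, abs_mul, abs_of_pos hspos]
        calc |x i / s - (round (x i / s) : ℝ)| * s ≤ (1/2) * s := by
              apply mul_le_mul_of_nonneg_right h1 hspos.le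
        _ = s / 2 := by ring
      have hsum : ∑ i, dist (x i) ((cCenter n L (j, z)) i) ^ 2 ≤ (n : ℝ) * (s/2)^2 := by
        calc ∑ i, dist (x i) ((cCenter n L (j, z)) i) ^ 2
            ≤ ∑ _i : Fin n, (s/2)^2 := by
              apply Finset.sum_le_sum
              intro i _
              have := hcoord i
              have h0 : (0:ℝ) ≤ dist (x i) ((cCenter n L (j, z)) i) := dist_nonneg
              nlinarith
        _ = (n : ℝ) * (s/2)^2 := by simp [Finset.sum_const, Finset.card_univ]
      calc Real.sqrt (∑ i, dist (x i) ((cCenter n L (j, z)) i) ^ 2)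
          ≤ Real.sqrt ((n : ℝ) * (s/2)^2) := Real.sqrt_le_sqrt hsum
      _ ≤ Real.sqrt (((n:ℝ)+1)^2 * (s/2)^2) := by
            apply Real.sqrt_le_sqrt
            have h2 : (0:ℝ) ≤ (s/2)^2 := sq_nonneg _
            nlinarith [sq_nonneg ((n:ℝ))]
      _ = ((n:ℝ)+1) * (s/2) := by
            rw [← mul_pow, Real.sqrt_sq (by positivity)]
    intro y hy
    have hyx : dist y x < r := mem_ball.1 hy
    have : dist y (cCenter n L (j, z)) < r + (n+1) * (s/2) :=
      (dist_triangle y x (cCenter n L (j, z))).trans_lt (by linarith)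
    have hkey : r + (n+1) * (s/2) ≤ L ^ (j+1) := by
      have hsn : (n+1) * (s/2) ≤ L ^ j * (L - 1) := by
        have ha : (0:ℝ) ≤ L ^ j * (L - 1) :=
          mul_nonneg (zpow_pos hL0 j).le (by linarith)
        have hn1 : (0:ℝ) < (n:ℝ)+1 := by positivity
        have heq : ((n:ℝ)+1) * (spc n L j / 2) = L ^ j * (L-1) / 2 := by
          rw [spc]; field_simp
        rw [hs, heq]
        linarith
      have : L ^ (j+1) = L ^ j + L ^ j * (L - 1) := by
        rw [zpow_add₀ (ne_of_gt hL0) j 1, zpow_one]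
        ring
      rw [this]
      linarith
    exact mem_ball.2 (lt_of_lt_of_le this hkey)
  · -- cost
    have hrad : cRad L ((j, z) : Cand n) = L ^ (j+1) := rfl
    have hb1 : L ^ (j+1) ≤ (L * L) * r := by
      have h : L ^ (j+1) = L ^ (j-1) * (L * L) := by
        rw [show j + 1 = (j-1) + 2 by ring, zpow_add₀ (ne_of_gt hL0), zpow_two]
      rw [h]
      have := hrlt.le
      nlinarith [zpow_pos hL0 (j-1), mul_pos hL0 hL0]
    have hcost : omegaC β * (L ^ (j+1)) ^ β ≤ L ^ (2*β) * (omegaC β * r ^ β) := by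
      have hω : 0 ≤ omegaC β := (omegaC_pos hβ).le
      have h1 : (L ^ (j+1) : ℝ) ^ β ≤ ((L*L) * r) ^ β :=
        Real.rpow_le_rpow (zpow_pos hL0 _).le hb1 hβ.le
      have hLL : (L * L : ℝ) = L ^ ((2:ℕ) : ℝ) := by
        rw [Real.rpow_natCast]; ring
      have h2 : ((L*L) * r) ^ β = L ^ (2*β) * r ^ β := by
        rw [Real.mul_rpow (by positivity) hr.le, hLL, ← Real.rpow_mul hL0.le]
        norm_num
      calc omegaC β * (L ^ (j+1)) ^ β ≤ omegaC β * ((L*L) * r)^β := by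
            apply mul_le_mul_of_nonneg_left h1 hω
      _ = L ^ (2*β) * (omegaC β * r ^ β) := by rw [h2]; ring
    change ENNReal.ofReal (omegaC β * cRad L ((j, z) : Cand n) ^ β) ≤ _
    rw [hrad, ← ENNReal.ofReal_mul (by positivity)]
    exact ENNReal.ofReal_le_ofReal hcost


lemma ccost_pos {n : ℕ} {β L : ℝ} (hβ : 0 < β) (hL : 1 < L) (b : Cand n) :
    0 < ccost β L b := by
  rw [ccost]
  apply ENNReal.ofReal_pos.2
  exact mul_pos (omegaC_pos hβ) (Real.rpow_pos_of_pos (cRad_pos hL b) _)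

lemma diam_cBall_le {n : ℕ} {L : ℝ} (b : Cand n) :
    EMetric.diam (cBall n L b) ≤ 2 * ENNReal.ofReal (cRad L b) := by
  rw [cBall, ← Metric.emetric_ball]
  exact EMetric.diam_ball

/-- covering by a candidate family costs at most its mass -/
lemma hCont_le_kap {n : ℕ} {β L : ℝ} (hβ : 0 < β) (hL : 1 < L) (C : Set (Cand n)) :
    hCont n β (⋃ b ∈ C, cBall n L b) ≤ kap n β L C := by
  classical
  obtain ⟨f, hf⟩ := exists_injective_nat (Cand n)
  set e : ℕ → Option (Cand n) :=
    fun i => if h : ∃ b ∈ C, f b = i then some h.choose else none with he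
  have he_mem : ∀ b ∈ C, e (f b) = some b := by
    intro b hb
    have hex : ∃ b' ∈ C, f b' = f b := ⟨b, hb, rfl⟩
    rw [he]
    simp only [hex, dif_pos]
    congr 1
    exact hf hex.choose_spec.2
  have he_some : ∀ i b, e i = some b → b ∈ C ∧ f b = i := by
    intro i b hib
    replace hib : (if h : ∃ b' ∈ C, f b' = i then some h.choose else none) = some b := hib
    split_ifs at hib with h
    obtain rfl : h.choose = b := Option.some_injective _ hib
    exact h.choose_spec
  set x : ℕ → Rn n := fun i => (e i).elim 0 (cCenter n L) with hx
  set r : ℕ → ℝ := fun i => (e i).elim 0 (cRad L) with hr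
  have hcov : (⋃ b ∈ C, cBall n L b) ⊆ ⋃ i, ball (x i) (r i) := by
    intro y hy
    obtain ⟨b, hb, hyb⟩ := mem_iUnion₂.1 hy
    refine mem_iUnion.2 ⟨f b, ?_⟩
    have hxb : x (f b) = cCenter n L b := by
      simp only [hx, he_mem b hb, Option.elim]
    have hrb : r (f b) = cRad L b := by
      simp only [hr, he_mem b hb, Option.elim]
    rw [hxb, hrb]
    exact hyb
  refine (hCont_le_of_cover x r hcov).trans ?_
  rw [kap_apply]
  set g : Cand n → ℝ≥0∞ := Set.indicator C (ccost β L) with hg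
  set F : ℕ → ℝ≥0∞ := fun i => ENNReal.ofReal (omegaC β * r i ^ β) with hF
  have key : ∑' i, F i = ∑' b, g b := by
    refine tsum_eq_tsum_of_ne_zero_bij (fun b => f b.1) ?_ ?_ ?_
    · intro a b hab
      exact Subtype.ext (hf hab)
    · intro i hi
      rcases ho : e i with _ | b
      · exfalso
        apply hi
        rw [hF, hr]
        simp only [ho, Option.elim]
        exact zero_cost hβ
      · obtain ⟨hbC, hfb⟩ := he_some i b ho
        refine ⟨⟨b, ?_⟩, hfb⟩
        rw [Function.mem_support, hg]
        rw [Set.indicator_of_mem hbC]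
        exact (ccost_pos hβ hL b).ne'
    · rintro ⟨b, hb⟩
      rw [Function.mem_support, hg] at hb
      have hbC : b ∈ C := by
        by_contra hbC
        exact hb (Set.indicator_of_notMem hbC _)
      simp only [hF, hr, he_mem b hbC, Option.elim, hg, Set.indicator_of_mem hbC, ccost]
  exact le_of_eq key

/-- pre-measure bound from a candidate cover with small balls -/
lemma pre_le_kap {n : ℕ} {β L : ℝ} (hβ : 0 < β) (hL : 1 < L) {C : Set (Cand n)}
    {s : Set (Rn n)} {rr : ℝ≥0∞}
    (hcov : s ⊆ ⋃ b ∈ C, cBall n L b)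
    (hdiam : ∀ b ∈ C, EMetric.diam (cBall n L b) ≤ rr) :
    OuterMeasure.mkMetric'.pre (mg n β) rr s ≤ kap n β L C := by
  calc OuterMeasure.mkMetric'.pre (mg n β) rr s
      ≤ OuterMeasure.mkMetric'.pre (mg n β) rr (⋃ b ∈ C, cBall n L b) :=
        measure_mono hcov
  _ ≤ ∑' b : C, OuterMeasure.mkMetric'.pre (mg n β) rr (cBall n L b.1) :=
        measure_biUnion_le _ (Set.to_countable C) _
  _ ≤ ∑' b : C, ccost β L b.1 := by
        refine ENNReal.tsum_le_tsum fun b => ?_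
        refine (OuterMeasure.mkMetric'.pre_le (hdiam b.1 b.2)).trans ?_
        exact mg_le (Subset.refl _)
  _ = kap n β L C := by
        rw [kap_apply, tsum_subtype]

/-- rounding covers into candidate covers -/
lemma exists_cand_cover {n : ℕ} {β L : ℝ} (hβ : 0 < β) (hL : 1 < L) {E : Set (Rn n)}
    (hE : hCont n β E ≠ ∞) {δ : ℝ≥0∞} (hδ : 0 < δ) :
    ∃ C : Set (Cand n), (E ⊆ ⋃ b ∈ C, cBall n L b) ∧
      kap n β L C ≤ ENNReal.ofReal (L ^ (2*β)) * (hCont n β E + δ) := by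
  classical
  obtain ⟨x, r, hcov, hmass⟩ := hCont_exists_cover hE hδ
  set Fi : ℕ → Set (Cand n) :=
    fun i => if h : 0 < r i then {(exists_round hL hβ (x := x i) h).choose} else ∅ with hFi
  refine ⟨⋃ i, Fi i, ?_, ?_⟩
  · refine hcov.trans ?_
    refine iUnion_subset fun i => ?_
    rcases lt_or_ge 0 (r i) with h | h
    · have hsub := (exists_round hL hβ (x := x i) h).choose_spec.1
      refine hsub.trans ?_
      intro y hy
      refine mem_iUnion₂.2 ⟨(exists_round hL hβ (x := x i) h).choose, ?_, hy⟩
      exact mem_iUnion.2 ⟨i, by rw [hFi]; simp [h]⟩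
    · rw [ball_eq_empty.2 h]
      exact empty_subset _
  · calc kap n β L (⋃ i, Fi i) ≤ ∑' i, kap n β L (Fi i) := measure_iUnion_le _
    _ ≤ ∑' i, ENNReal.ofReal (L ^ (2*β)) * ENNReal.ofReal (omegaC β * r i ^ β) := by
        refine ENNReal.tsum_le_tsum fun i => ?_
        rw [hFi]
        rcases lt_or_ge 0 (r i) with h | h
        · simp only [h, dif_pos]
          rw [kap_singleton]
          exact (exists_round hL hβ (x := x i) h).choose_spec.2
        · simp only [not_lt.2 h, dif_neg]
          simp
    _ = ENNReal.ofReal (L ^ (2*β)) * ∑' i, ENNReal.ofReal (omegaC β * r i ^ β) :=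
        ENNReal.tsum_mul_left
    _ ≤ ENNReal.ofReal (L ^ (2*β)) * (hCont n β E + δ) :=
        mul_le_mul_right hmass _

/-- subadditivity of hCont for two sets -/
lemma hCont_union_le {n : ℕ} {β : ℝ} (X Y : Set (Rn n)) :
    hCont n β (X ∪ Y) ≤ hCont n β X + hCont n β Y := by
  classical
  by_cases hX : hCont n β X = ∞
  · rw [hX, top_add]; exact le_top
  by_cases hY : hCont n β Y = ∞
  · rw [hY, add_top]; exact le_top
  refine ENNReal.le_of_forall_pos_le_add fun ε hε _ => ?_
  have hε2 : (0:ℝ≥0∞) < (ε : ℝ≥0∞) / 2 := by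
    simp [ENNReal.div_pos_iff, hε.ne']
  obtain ⟨x1, r1, hc1, hm1⟩ := hCont_exists_cover hX hε2
  obtain ⟨x2, r2, hc2, hm2⟩ := hCont_exists_cover hY hε2
  set x : ℕ → Rn n := fun i => if Even i then x1 (i/2) else x2 (i/2) with hx
  set r : ℕ → ℝ := fun i => if Even i then r1 (i/2) else r2 (i/2) with hr
  have hcov : X ∪ Y ⊆ ⋃ i, ball (x i) (r i) := by
    rintro z (hz | hz)
    · obtain ⟨i, hi⟩ := mem_iUnion.1 (hc1 hz)
      refine mem_iUnion.2 ⟨2*i, ?_⟩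
      have h1 : Even (2*i) := even_two_mul i
      have h2 : 2*i/2 = i := by omega
      rw [hx, hr]
      simpa [h1, h2] using hi
    · obtain ⟨i, hi⟩ := mem_iUnion.1 (hc2 hz)
      refine mem_iUnion.2 ⟨2*i+1, ?_⟩
      have h1 : ¬ Even (2*i+1) := by simp [Nat.even_add_one, parity_simps]
      have h2 : (2*i+1)/2 = i := by omega
      rw [hx, hr]
      simpa [h1, h2] using hi
  refine (hCont_le_of_cover x r hcov).trans ?_
  have hsplit : ∑' i, ENNReal.ofReal (omegaC β * r i ^ β) =
      (∑' i, ENNReal.ofReal (omegaC β * r1 i ^ β)) +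
      (∑' i, ENNReal.ofReal (omegaC β * r2 i ^ β)) := by
    rw [← tsum_even_add_odd ENNReal.summable ENNReal.summable]
    congr 1
    · refine tsum_congr fun i => ?_
      have h1 : Even (2*i) := even_two_mul i
      have h2 : 2*i/2 = i := by omega
      rw [hr]; simp [h1, h2]
    · refine tsum_congr fun i => ?_
      have h1 : ¬ Even (2*i+1) := by simp [Nat.even_add_one, parity_simps]
      have h2 : (2*i+1)/2 = i := by omega
      rw [hr]; simp [h1, h2]
  rw [hsplit]
  calc (∑' i, ENNReal.ofReal (omegaC β * r1 i ^ β)) +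
      (∑' i, ENNReal.ofReal (omegaC β * r2 i ^ β))
      ≤ (hCont n β X + (ε:ℝ≥0∞)/2) + (hCont n β Y + (ε:ℝ≥0∞)/2) := add_le_add hm1 hm2
  _ = hCont n β X + hCont n β Y + ((ε:ℝ≥0∞)/2 + (ε:ℝ≥0∞)/2) := by ring
  _ = hCont n β X + hCont n β Y + ε := by rw [ENNReal.add_halves]

lemma ccost_le_kap {n : ℕ} {β L : ℝ} {C : Set (Cand n)} {b : Cand n} (hb : b ∈ C) :
    ccost β L b ≤ kap n β L C := by
  rw [← kap_singleton n β L b]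
  exact measure_mono (singleton_subset_iff.2 hb)

lemma coord_le_norm {n : ℕ} (x : Rn n) (i : Fin n) : |x i| ≤ ‖x‖ := by
  have h : |x i| ^ 2 ≤ ∑ j, ‖x j‖ ^ 2 := by
    calc |x i| ^ 2 = ‖x i‖ ^ 2 := by rw [Real.norm_eq_abs]
    _ ≤ ∑ j, ‖x j‖ ^ 2 := Finset.single_le_sum (f := fun j => ‖x j‖ ^ 2)
        (fun j _ => sq_nonneg _) (Finset.mem_univ i)
  rw [EuclideanSpace.norm_eq]
  exact (Real.le_sqrt (abs_nonneg _) (Finset.sum_nonneg fun j _ => sq_nonneg _)).2 h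

/-- the finite pool of candidates at scales ≥ L^(-m), cost ≤ T, meeting ball 0 m -/
def pool (n : ℕ) (β L : ℝ) (T : ℝ≥0∞) (m : ℕ) : Set (Cand n) :=
  {b | L ^ (-(m:ℤ)) ≤ cRad L b ∧ ccost β L b ≤ T ∧
    (cBall n L b ∩ ball (0 : Rn n) m).Nonempty}

lemma pool_mono {n : ℕ} {β L : ℝ} {T : ℝ≥0∞} (hL : 1 < L) :
    Monotone (pool n β L T) := by
  intro m m' hm b hb
  obtain ⟨h1, h2, h3⟩ := hb
  refine ⟨le_trans ?_ h1, h2, ?_⟩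
  · exact zpow_le_zpow_right₀ hL.le (by exact_mod_cast neg_le_neg (Int.ofNat_le.2 hm))
  · refine h3.mono (inter_subset_inter_right _ ?_)
    exact ball_subset_ball (by exact_mod_cast hm)

lemma exists_mem_pool {n : ℕ} {β L : ℝ} {T : ℝ≥0∞} (hL : 1 < L)
    {b : Cand n} (hcost : ccost β L b ≤ T) :
    ∃ m : ℕ, b ∈ pool n β L T m := by
  have hrad : 0 < cRad L b := cRad_pos hL b
  obtain ⟨m₁, hm₁⟩ : ∃ m₁ : ℕ, -(m₁:ℤ) ≤ b.1 + 1 := ⟨(b.1 + 1).natAbs, by omega⟩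
  have h1 : L ^ (-(m₁:ℤ)) ≤ cRad L b := by
    rw [cRad]
    exact zpow_le_zpow_right₀ hL.le hm₁
  obtain ⟨m₂, hm₂⟩ := exists_nat_gt ‖cCenter n L b‖
  refine ⟨max m₁ m₂, ?_, hcost, ?_⟩
  · refine le_trans ?_ h1
    refine zpow_le_zpow_right₀ hL.le ?_
    simp only [neg_le_neg_iff]
    exact_mod_cast le_max_left m₁ m₂
  · refine ⟨cCenter n L b, mem_ball_self hrad, ?_⟩
    rw [mem_ball, dist_zero_right]
    calc ‖cCenter n L b‖ < m₂ := hm₂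
    _ ≤ ((max m₁ m₂ : ℕ) : ℝ) := by exact_mod_cast le_max_right m₁ m₂

lemma pool_finite {n : ℕ} {β L : ℝ} {T : ℝ≥0∞} (hβ : 0 < β) (hL : 1 < L) (hT : T ≠ ∞)
    (m : ℕ) : (pool n β L T m).Finite := by
  have hL0 : (0:ℝ) < L := by linarith
  have hω : 0 < omegaC β := omegaC_pos hβ
  -- uniform radius bound
  set M : ℝ := T.toReal / omegaC β with hM
  set Rmax : ℝ := M ^ (1/β) with hRmax
  have hradle : ∀ b ∈ pool n β L T m, cRad L b ≤ Rmax := by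
    intro b hb
    have h2 := hb.2.1
    rw [ccost] at h2
    have hle : omegaC β * cRad L b ^ β ≤ T.toReal :=
      (ENNReal.ofReal_le_iff_le_toReal hT).1 h2
    have hrpow : cRad L b ^ β ≤ M := by
      rw [hM]
      rw [le_div_iff₀ hω]
      linarith [hle]
    calc cRad L b = (cRad L b ^ β) ^ (1/β) := by
          rw [← Real.rpow_mul (cRad_pos hL b).le]
          rw [mul_one_div, div_self hβ.ne', Real.rpow_one]
    _ ≤ M ^ (1/β) := Real.rpow_le_rpow (Real.rpow_nonneg (cRad_pos hL b).le _) hrpow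
          (by positivity)
  -- Rmax > 0 unless pool empty
  rcases eq_empty_or_nonempty (pool n β L T m) with he | hne
  · rw [he]; exact finite_empty
  have hRpos : 0 < Rmax := by
    obtain ⟨b, hb⟩ := hne
    exact lt_of_lt_of_le (cRad_pos hL b) (hradle b hb)
  obtain ⟨jmax, _, hjmax2⟩ := exists_mem_Ioc_zpow hRpos hL
  -- scale bound: for b in pool, -(m:ℤ) ≤ b.1 + 1 ≤ jmax + 1
  have hscale : ∀ b ∈ pool n β L T m, b.1 + 1 ∈ Icc (-(m:ℤ)) (jmax + 1) := by
    intro b hb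
    constructor
    · have := hb.1
      rw [cRad] at this
      exact (zpow_le_zpow_iff_right₀ hL).1 this
    · have h1 : cRad L b ≤ L ^ (jmax + 1) := le_trans (hradle b hb) hjmax2
      rw [cRad] at h1
      exact (zpow_le_zpow_iff_right₀ hL).1 h1
  -- center bound
  set smin : ℝ := spc n L (-(m:ℤ) - 1) with hsmin
  have hsminpos : 0 < smin := spc_pos hL _
  set K : ℝ := ((m : ℝ) + Rmax) / smin with hK
  have hcenter : ∀ b ∈ pool n β L T m, ∀ i, |(b.2 i : ℝ)| ≤ K := by
    intro b hb i
    obtain ⟨y, hy1, hy2⟩ := hb.2.2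
    have hnorm : ‖cCenter n L b‖ ≤ (m : ℝ) + Rmax := by
      have hd1 : dist y (cCenter n L b) < cRad L b := mem_ball.1 hy1
      have hd2 : ‖y‖ < (m:ℝ) := by
        rw [← dist_zero_right]
        exact mem_ball.1 hy2
      have h3 : ‖cCenter n L b‖ - ‖y‖ ≤ ‖cCenter n L b - y‖ := norm_sub_norm_le _ _
      have h4 : ‖cCenter n L b - y‖ = dist y (cCenter n L b) := by
        rw [dist_comm, dist_eq_norm]
      have h5 := hradle b hb
      linarith
    have hcoord : |(cCenter n L b) i| ≤ (m : ℝ) + Rmax :=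
      le_trans (coord_le_norm _ i) hnorm
    have hcc : (cCenter n L b) i = (b.2 i : ℝ) * spc n L b.1 := rfl
    rw [hcc, abs_mul, abs_of_pos (spc_pos hL _)] at hcoord
    have hsp : smin ≤ spc n L b.1 := by
      rw [hsmin, spc, spc]
      have h1 : L ^ (-(m:ℤ) - 1) ≤ L ^ b.1 := by
        refine zpow_le_zpow_right₀ hL.le ?_
        have := (hscale b hb).1
        omega
      have hn1 : (0:ℝ) < (n:ℝ) + 1 := by positivity
      have hL1 : (0:ℝ) ≤ L - 1 := by linarith
      gcongr
    rw [hK]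
    rw [le_div_iff₀ hsminpos]
    calc |(b.2 i : ℝ)| * smin ≤ |(b.2 i : ℝ)| * spc n L b.1 :=
          mul_le_mul_of_nonneg_left hsp (abs_nonneg _)
    _ ≤ (m:ℝ) + Rmax := hcoord
  -- wrap up: embed into a finite product set
  have hsub : pool n β L T m ⊆
      {b : Cand n | b.1 ∈ Icc (-(m:ℤ) - 1) jmax ∧ ∀ i, b.2 i ∈ Icc (-(⌈K⌉)) ⌈K⌉} := by
    intro b hb
    constructor
    · have := hscale b hb
      simp only [mem_Icc] at this ⊢
      omega
    · intro i
      have := hcenter b hb i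
      simp only [mem_Icc]
      constructor
      · have h1 : -(K) ≤ (b.2 i : ℝ) := by
          have := abs_le.1 this
          linarith [this.1]
        have h2 : ((-⌈K⌉ : ℤ) : ℝ) ≤ (b.2 i : ℝ) := by
          push_cast
          calc (-(⌈K⌉:ℝ)) ≤ -K := by
                have := Int.le_ceil K
                linarith
          _ ≤ (b.2 i : ℝ) := h1
        exact_mod_cast h2
      · have h1 : (b.2 i : ℝ) ≤ K := (abs_le.1 this).2
        have h2 : (b.2 i : ℝ) ≤ (⌈K⌉ : ℝ) := h1.trans (Int.le_ceil K)
        exact_mod_cast h2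
  refine Set.Finite.subset (Set.Finite.prod (finite_Icc (-(m:ℤ) - 1) jmax)
      (Set.Finite.pi fun _ : Fin n => finite_Icc (-(⌈K⌉)) ⌈K⌉)) ?_
  intro b hb
  exact Set.mem_prod.2 ⟨(hsub hb).1, Set.mem_univ_pi.2 fun i => (hsub hb).2 i⟩

open Filter in
lemma mem_hyper_of_ge (N : ℕ) : {k : ℕ | N ≤ k} ∈ Filter.hyperfilter ℕ := by
  refine Filter.hyperfilter_le_cofinite ?_
  rw [Filter.mem_cofinite]
  have : {k : ℕ | N ≤ k}ᶜ ⊆ {k | k < N} := by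
    intro k hk
    simpa using hk
  exact (Set.finite_lt_nat N).subset this

lemma exists_u {Good : ℕ → Set ℕ} (hGood : ∀ m, Good m ∈ Filter.hyperfilter ℕ) :
    ∃ u : ℕ → ℕ, Monotone u ∧ ∀ m, m ≤ u m ∧ u m ∈ Good m := by
  have hstep : ∀ (m prev : ℕ), ∃ k, prev ≤ k ∧ m ≤ k ∧ k ∈ Good m := by
    intro m prev
    obtain ⟨k, hk⟩ := Filter.nonempty_of_mem
      (Filter.inter_mem (mem_hyper_of_ge (max prev m)) (hGood m))
    exact ⟨k, (le_max_left _ _).trans hk.1, (le_max_right _ _).trans hk.1, hk.2⟩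
  choose f hf1 hf2 hf3 using hstep
  set u : ℕ → ℕ := fun m => Nat.rec (f 0 0) (fun m' ih => f (m'+1) ih) m with hu
  have husucc : ∀ m, u (m+1) = f (m+1) (u m) := fun m => rfl
  have hmono : Monotone u := monotone_nat_of_le_succ fun m => by
    rw [husucc]; exact hf1 _ _
  refine ⟨u, hmono, fun m => ?_⟩
  cases m with
  | zero => exact ⟨hf2 0 0, hf3 0 0⟩
  | succ m' => rw [husucc]; exact ⟨hf2 _ _, hf3 _ _⟩

lemma tendsto_zpow_neg {L : ℝ} (hL : 1 < L) :
    Tendsto (fun m : ℕ => L ^ (-(m:ℤ))) atTop (𝓝 0) := by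
  have heq : (fun m : ℕ => L ^ (-(m:ℤ))) = fun m : ℕ => (1/L) ^ m := by
    funext m
    rw [one_div, inv_pow, ← zpow_natCast L m, ← zpow_neg]
  rw [heq]
  apply tendsto_pow_atTop_nhds_zero_of_lt_one
  · positivity
  · rw [one_div]
    exact inv_lt_one_of_one_lt₀ hL

lemma exists_small_scale {L : ℝ} (hL : 1 < L) {r : ℝ≥0∞} (hr : 0 < r) (N : ℕ) :
    ∃ m : ℕ, N ≤ m ∧ 2 * ENNReal.ofReal (L ^ (-(m:ℤ))) ≤ r := by
  rcases eq_top_or_lt_top r with htop | hfin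
  · exact ⟨N, le_rfl, by rw [htop]; exact le_top⟩
  · have hr' : 0 < r.toReal := ENNReal.toReal_pos hr.ne' hfin.ne
    have hev : ∀ᶠ m : ℕ in atTop, L ^ (-(m:ℤ)) < r.toReal / 2 :=
      (tendsto_zpow_neg hL).eventually_lt_const (by positivity)
    obtain ⟨m, hm1, hm2⟩ := ((eventually_ge_atTop N).and hev).exists
    refine ⟨m, hm1, ?_⟩
    have h1 : ENNReal.ofReal (L ^ (-(m:ℤ))) ≤ ENNReal.ofReal (r.toReal / 2) :=
      ENNReal.ofReal_le_ofReal hm2.le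
    calc 2 * ENNReal.ofReal (L ^ (-(m:ℤ))) ≤ 2 * ENNReal.ofReal (r.toReal / 2) := by gcongr
    _ = ENNReal.ofReal (2 * (r.toReal / 2)) := by
          rw [ENNReal.ofReal_mul (by norm_num : (0:ℝ) ≤ 2)]
          norm_num
    _ = ENNReal.ofReal r.toReal := by rw [mul_div_cancel₀ _ (by norm_num : (2:ℝ) ≠ 0)]
    _ = r := ENNReal.ofReal_toReal hfin.ne

lemma exists_L {b ρ : ℝ} (hρ : 0 < ρ) : ∃ L : ℝ, 1 < L ∧ L ^ b < 1 + ρ := by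
  have hcont : ContinuousAt (fun x : ℝ => x ^ b) 1 :=
    Real.continuousAt_rpow_const 1 b (Or.inl one_ne_zero)
  have h2 : Tendsto (fun x : ℝ => x ^ b) (𝓝 1) (𝓝 1) := by
    have := hcont.tendsto
    rwa [Real.one_rpow] at this
  have h4 : ∀ᶠ x in 𝓝[>] (1:ℝ), x ^ b < 1 + ρ :=
    (h2.eventually_lt_const (by linarith)).filter_mono nhdsWithin_le_nhds
  obtain ⟨L, hL2, hL1⟩ := (h4.and self_mem_nhdsWithin).exists
  exact ⟨L, hL1, hL2⟩

/-- KEY BOUND: for the increasing sets lemma. -/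
lemma key_bound {n : ℕ} {β L : ℝ} (hβ : 0 < β) (hL : 1 < L) (E : ℕ → Set (Rn n))
    (hE : Monotone E) {S δ : ℝ≥0∞} (hSb : ∀ k, hCont n β (E k) ≤ S) (hStop : S ≠ ∞)
    (hδ : 0 < δ) (hδtop : δ ≠ ∞) :
    hCont n β (⋃ k, E k) ≤ ENNReal.ofReal (L ^ (2*β)) * (S + δ) := by
  classical
  set T : ℝ≥0∞ := ENNReal.ofReal (L ^ (2*β)) * (S + δ) with hT
  have hTtop : T ≠ ∞ :=
    ENNReal.mul_ne_top ENNReal.ofReal_ne_top (ENNReal.add_ne_top.2 ⟨hStop, hδtop⟩)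
  -- candidate covers of each E k of mass ≤ T
  have hcovex : ∀ k, ∃ C : Set (Cand n),
      (E k ⊆ ⋃ b ∈ C, cBall n L b) ∧ kap n β L C ≤ T := by
    intro k
    have hk : hCont n β (E k) ≠ ∞ := ne_top_of_le_ne_top hStop (hSb k)
    obtain ⟨C, h1, h2⟩ := exists_cand_cover hβ hL hk hδ
    refine ⟨C, h1, h2.trans ?_⟩
    rw [hT]
    exact mul_le_mul_right (add_le_add (hSb k) le_rfl) _
  choose Cov hCov1 hCov2 using hcovex
  -- ultrafilter limit of the covers
  set Cinf : Set (Cand n) := {b | {k | b ∈ Cov k} ∈ Filter.hyperfilter ℕ} with hCinf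
  set g : ℝ≥0∞ := kap n β L Cinf with hg
  -- mass bound for the limit
  have hgT : g ≤ T := by
    rw [hg, kap_apply, ENNReal.tsum_eq_iSup_sum]
    refine iSup_le fun F => ?_
    set F' : Finset (Cand n) := F.filter (fun b => b ∈ Cinf) with hF'
    have hmem : {k : ℕ | ∀ b ∈ F', b ∈ Cov k} ∈ Filter.hyperfilter ℕ := by
      have : {k : ℕ | ∀ b ∈ F', b ∈ Cov k} = ⋂ b ∈ (F' : Set (Cand n)), {k | b ∈ Cov k} := by
        ext k; simp
      rw [this]
      refine (Filter.biInter_mem (F'.finite_toSet)).2 fun b hb => ?_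
      have : b ∈ Cinf := by
        simp only [hF', Finset.mem_coe, Finset.mem_filter] at hb
        exact hb.2
      exact this
    obtain ⟨k₀, hk₀⟩ := Filter.nonempty_of_mem hmem
    have hsum : ∑ b ∈ F, Set.indicator Cinf (ccost β L) b = ∑ b ∈ F', ccost β L b := by
      rw [hF', Finset.sum_filter]
      refine Finset.sum_congr rfl fun b _ => ?_
      by_cases hb : b ∈ Cinf <;> simp [hb, Set.indicator_of_mem, Set.indicator_of_notMem]
    rw [hsum]
    have heq : ∑ b ∈ F', ccost β L b = kap n β L (F' : Set (Cand n)) := by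
      rw [kap_apply]
      rw [tsum_eq_sum (s := F') (fun b hb => Set.indicator_of_notMem (by simpa using hb) _)]
      exact Finset.sum_congr rfl fun b hb =>
        (Set.indicator_of_mem (by simpa using hb) _).symm
    rw [heq]
    calc kap n β L (F' : Set (Cand n)) ≤ kap n β L (Cov k₀) :=
          measure_mono fun b hb => hk₀ b (by simpa using hb)
    _ ≤ T := hCov2 k₀
  -- good time sets
  have hGood : ∀ m : ℕ,
      {k : ℕ | ∀ b ∈ pool n β L T m, (b ∈ Cov k ↔ b ∈ Cinf)} ∈ Filter.hyperfilter ℕ := by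
    intro m
    have : {k : ℕ | ∀ b ∈ pool n β L T m, (b ∈ Cov k ↔ b ∈ Cinf)} =
        ⋂ b ∈ pool n β L T m, {k | b ∈ Cov k ↔ b ∈ Cinf} := by
      ext k; simp
    rw [this]
    refine (Filter.biInter_mem (pool_finite hβ hL hTtop m)).2 fun b _ => ?_
    by_cases hb : b ∈ Cinf
    · have h1 : {k | b ∈ Cov k} ∈ Filter.hyperfilter ℕ := hb
      refine Filter.mem_of_superset h1 fun k hk => ?_
      simp only [mem_setOf_eq] at hk ⊢
      exact ⟨fun _ => hb, fun _ => hk⟩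
    · have h1 : {k | b ∈ Cov k}ᶜ ∈ Filter.hyperfilter ℕ :=
        (Ultrafilter.compl_mem_iff_notMem).2 hb
      refine Filter.mem_of_superset h1 fun k hk => ?_
      simp only [mem_compl_iff, mem_setOf_eq] at hk ⊢
      exact ⟨fun h => absurd h hk, fun h => absurd h hb⟩
  obtain ⟨u, humono, hu⟩ := exists_u hGood
  -- residual sets
  set W : Set (Rn n) := ⋃ b ∈ Cinf, cBall n L b with hW
  set D : ℕ → Set (Rn n) := fun ℓ => (E (u ℓ) ∩ ball (0:Rn n) ℓ) \ W with hD
  have hDmono : Monotone D := by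
    intro ℓ ℓ' h
    refine diff_subset_diff_left (inter_subset_inter ?_ ?_)
    · exact hE (humono h)
    · exact ball_subset_ball (by exact_mod_cast h)
  have hDunion : (⋃ k, E k) \ W ⊆ ⋃ ℓ, D ℓ := by
    intro x hx
    obtain ⟨k₀, hk₀⟩ := mem_iUnion.1 hx.1
    obtain ⟨ℓ₀, hℓ₀⟩ := exists_nat_gt ‖x‖
    refine mem_iUnion.2 ⟨max k₀ ℓ₀, ⟨⟨?_, ?_⟩, hx.2⟩⟩
    · have h1 : k₀ ≤ u (max k₀ ℓ₀) := le_trans (le_max_left _ _) (hu _).1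
      exact hE h1 hk₀
    · rw [mem_ball, dist_zero_right]
      calc ‖x‖ < ℓ₀ := hℓ₀
      _ ≤ ((max k₀ ℓ₀ : ℕ) : ℝ) := by exact_mod_cast le_max_right k₀ ℓ₀
  -- claim A: the residual pieces are covered by the small balls of the covers
  set Sm : ℕ → Set (Cand n) := fun m => {b ∈ Cov (u m) | cRad L b < L ^ (-(m:ℤ))} with hSm
  have claimA : ∀ ℓ m, ℓ ≤ m → D ℓ ⊆ ⋃ b ∈ Sm m, cBall n L b := by
    intro ℓ m hlm x hx
    have hxE : x ∈ E (u m) := hE (humono hlm) hx.1.1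
    obtain ⟨b, hb, hxb⟩ := mem_iUnion₂.1 (hCov1 (u m) hxE)
    by_cases hrad : cRad L b < L ^ (-(m:ℤ))
    · exact mem_iUnion₂.2 ⟨b, ⟨hb, hrad⟩, hxb⟩
    · exfalso
      push_neg at hrad
      have hxm : x ∈ ball (0:Rn n) (m:ℝ) := by
        have := hx.1.2
        rw [mem_ball] at this ⊢
        calc dist x 0 < ℓ := this
        _ ≤ (m:ℝ) := by exact_mod_cast hlm
      have hbpool : b ∈ pool n β L T m :=
        ⟨hrad, (ccost_le_kap hb).trans (hCov2 (u m)), ⟨x, hxb, hxm⟩⟩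
      have hbinf : b ∈ Cinf := ((hu m).2 b hbpool).1 hb
      exact hx.2 (mem_iUnion₂.2 ⟨b, hbinf, hxb⟩)
  -- claim B: the small balls have small mass
  have claimB : ∀ m, kap n β L (Sm m) ≤ T - kap n β L (Cinf ∩ pool n β L T m) := by
    intro m
    have hdisj : Disjoint (Sm m) (Cinf ∩ pool n β L T m) := by
      rw [Set.disjoint_left]
      rintro b ⟨_, hb2⟩ ⟨_, hbp⟩
      exact absurd hbp.1 (not_le.2 hb2)
    have hsub : Sm m ∪ (Cinf ∩ pool n β L T m) ⊆ Cov (u m) := by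
      rintro b (hb | hb)
      · exact hb.1
      · exact ((hu m).2 b hb.2).2 hb.1
    have h1 : kap n β L (Sm m) + kap n β L (Cinf ∩ pool n β L T m) ≤ T := by
      rw [← measure_union hdisj (cand_measurable _)]
      exact (measure_mono hsub).trans (hCov2 (u m))
    have hfin : kap n β L (Cinf ∩ pool n β L T m) ≠ ∞ := by
      refine ne_top_of_le_ne_top hTtop ?_
      calc kap n β L (Cinf ∩ pool n β L T m) ≤ kap n β L (Cov (u m)) :=
            measure_mono fun b hb => ((hu m).2 b hb.2).2 hb.1
      _ ≤ T := hCov2 (u m)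
    exact ENNReal.le_sub_of_add_le_right hfin h1
  -- the limit of kap (Cinf ∩ pool m) is g
  have hgsup : ⨆ m, kap n β L (Cinf ∩ pool n β L T m) = g := by
    have hmono : Monotone fun m => Cinf ∩ pool n β L T m := fun m m' h =>
      inter_subset_inter_right _ (pool_mono hL h)
    rw [hg, ← Monotone.measure_iUnion hmono]
    congr 1
    ext b
    simp only [mem_iUnion, mem_inter_iff]
    constructor
    · rintro ⟨m, hb, _⟩; exact hb
    · intro hb
      have hbk : ∃ k, b ∈ Cov k := by
        obtain ⟨k, hk⟩ := Filter.nonempty_of_mem (hb : {k | b ∈ Cov k} ∈ _)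
        exact ⟨k, hk⟩
      obtain ⟨k, hk⟩ := hbk
      obtain ⟨m, hm⟩ := exists_mem_pool hL ((ccost_le_kap hk).trans (hCov2 k))
      exact ⟨m, hb, hm⟩
  -- measure bound on the residual pieces
  have hmuD : ∀ ℓ, muB n β (D ℓ) ≤ T - g := by
    intro ℓ
    rw [muB_apply]
    have houter : (OuterMeasure.mkMetric' (mg n β)) (D ℓ) =
        ⨆ (r : ℝ≥0∞) (_ : 0 < r), OuterMeasure.mkMetric'.pre (mg n β) r (D ℓ) := by
      rw [OuterMeasure.mkMetric']
      rw [OuterMeasure.iSup_apply]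
      refine iSup_congr fun r => ?_
      rw [OuterMeasure.iSup_apply]
    rw [houter]
    refine iSup₂_le fun r hr => ?_
    rw [← hgsup, ENNReal.sub_iSup]
    · refine le_iInf fun m => ?_
      obtain ⟨m', hm'1, hm'2⟩ := exists_small_scale hL hr (max m ℓ)
      have hpre : OuterMeasure.mkMetric'.pre (mg n β) r (D ℓ) ≤ kap n β L (Sm m') := by
        refine pre_le_kap hβ hL (claimA ℓ m' (le_trans (le_max_right _ _) hm'1)) ?_
        intro b hb
        refine (diam_cBall_le b).trans ?_
        refine le_trans ?_ hm'2
        have : ENNReal.ofReal (cRad L b) ≤ ENNReal.ofReal (L ^ (-(m':ℤ))) :=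
          ENNReal.ofReal_le_ofReal hb.2.le
        exact mul_le_mul_right this 2
      refine hpre.trans ((claimB m').trans ?_)
      refine tsub_le_tsub_left ?_ T
      exact measure_mono (inter_subset_inter_right _
        (pool_mono hL (le_trans (le_max_left _ _) hm'1)))
    · exact hTtop
  -- assemble
  have hsplit : (⋃ k, E k) ⊆ W ∪ ((⋃ k, E k) \ W) := by
    intro x hx
    by_cases hxW : x ∈ W
    · exact Or.inl hxW
    · exact Or.inr ⟨hx, hxW⟩
  calc hCont n β (⋃ k, E k) ≤ hCont n β (W ∪ ((⋃ k, E k) \ W)) := hCont_mono hsplit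
  _ ≤ hCont n β W + hCont n β ((⋃ k, E k) \ W) := hCont_union_le _ _
  _ ≤ g + (T - g) := by
      refine add_le_add ?_ ?_
      · rw [hg, hW]
        exact hCont_le_kap hβ hL Cinf
      · calc hCont n β ((⋃ k, E k) \ W) ≤ muB n β ((⋃ k, E k) \ W) := hCont_le_muB hβ _
        _ ≤ muB n β (⋃ ℓ, D ℓ) := measure_mono hDunion
        _ = ⨆ ℓ, muB n β (D ℓ) := Monotone.measure_iUnion hDmono
        _ ≤ T - g := iSup_le hmuD
  _ = T := add_tsub_cancel_of_le hgT

/-- THE INCREASING SETS LEMMA for hCont. -/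
lemma hCont_iUnion_le {n : ℕ} {β : ℝ} (hβ : 0 < β) (E : ℕ → Set (Rn n))
    (hE : Monotone E) :
    hCont n β (⋃ k, E k) ≤ ⨆ k, hCont n β (E k) := by
  set S := ⨆ k, hCont n β (E k) with hS
  by_cases hStop : S = ∞
  · rw [hStop]; exact le_top
  refine ENNReal.le_of_forall_pos_le_add fun ε hε _ => ?_
  set δ : ℝ≥0∞ := (ε : ℝ≥0∞) / 2 with hδdef
  have hδpos : 0 < δ := ENNReal.div_pos (by exact_mod_cast hε.ne') (by norm_num)
  have hδtop : δ ≠ ∞ := ne_top_of_le_ne_top ENNReal.coe_ne_top ENNReal.half_le_self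
  set a : ℝ≥0∞ := S + δ with ha
  have hafin : a ≠ ∞ := ENNReal.add_ne_top.2 ⟨hStop, hδtop⟩
  set ρ : ℝ := ((ε:ℝ)/2) / (a.toReal + 1) with hρ
  have hεR : (0:ℝ) < (ε:ℝ) := by exact_mod_cast hε
  have hρpos : 0 < ρ := by
    apply div_pos (by linarith)
    positivity
  obtain ⟨L, hL, hLρ⟩ := exists_L (b := 2*β) hρpos
  have hkey := key_bound hβ hL E hE (fun k => le_iSup (fun k => hCont n β (E k)) k)
    hStop hδpos hδtop
  refine hkey.trans ?_
  have h1 : ENNReal.ofReal (L ^ (2*β)) ≤ 1 + ENNReal.ofReal ρ := by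
    calc ENNReal.ofReal (L^(2*β)) ≤ ENNReal.ofReal (1 + ρ) :=
          ENNReal.ofReal_le_ofReal hLρ.le
    _ = 1 + ENNReal.ofReal ρ := by
        rw [ENNReal.ofReal_add (by norm_num) hρpos.le, ENNReal.ofReal_one]
  have h2 : ENNReal.ofReal ρ * a ≤ (ε:ℝ≥0∞)/2 := by
    conv_lhs => rw [← ENNReal.ofReal_toReal hafin]
    rw [← ENNReal.ofReal_mul hρpos.le]
    have hle : ρ * a.toReal ≤ (ε:ℝ)/2 := by
      rw [hρ, div_mul_eq_mul_div, div_le_iff₀ (by positivity)]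
      nlinarith [ENNReal.toReal_nonneg (a := a)]
    calc ENNReal.ofReal (ρ * a.toReal) ≤ ENNReal.ofReal ((ε:ℝ)/2) :=
          ENNReal.ofReal_le_ofReal hle
    _ = (ε:ℝ≥0∞)/2 := by
        rw [ENNReal.ofReal_div_of_pos (by norm_num)]
        congr 1
        · exact ENNReal.ofReal_coe_nnreal
        · norm_num
  calc ENNReal.ofReal (L^(2*β)) * (S + δ) ≤ (1 + ENNReal.ofReal ρ) * a :=
        mul_le_mul_left h1 a
  _ = a + ENNReal.ofReal ρ * a := by ring
  _ ≤ (S + (ε:ℝ≥0∞)/2) + (ε:ℝ≥0∞)/2 := add_le_add le_rfl h2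
  _ = S + ε := by rw [add_assoc, ENNReal.add_halves]


lemma choqE_mono {n : ℕ} {β : ℝ} {A : Set (Rn n)} {f g : Rn n → ℝ≥0∞}
    (h : ∀ x, f x ≤ g x) : choqE n β A f ≤ choqE n β A g := by
  refine lintegral_mono fun t => ?_
  refine hCont_mono fun x hx => ⟨hx.1, lt_of_lt_of_le hx.2 (h x)⟩

theorem choquet_fatou' (n : ℕ) (β : ℝ) (hβ0 : 0 < β)
    (f : ℕ → Rn n → ℝ≥0∞) :
    choqE n β univ (fun x => liminf (fun m => f m x) atTop)
      ≤ liminf (fun m => choqE n β univ (f m)) atTop := by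
  classical
  set G : ℕ → Rn n → ℝ≥0∞ := fun N x => ⨅ m, ⨅ (_ : N ≤ m), f m x with hG
  have hGmono : ∀ x, Monotone fun N => G N x := by
    intro x N N' hNN'
    exact le_iInf₂ fun m hm => iInf₂_le m (hNN'.trans hm)
  -- the layer sets
  set A : ℕ → ℝ → Set (Rn n) := fun N t => {x ∈ univ | ENNReal.ofReal t < G N x} with hA
  have hAmono : ∀ t, Monotone fun N => A N t := by
    intro t N N' h x hx
    exact ⟨hx.1, lt_of_lt_of_le hx.2 (hGmono x h)⟩
  -- pointwise rewriting of the liminf set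
  have hset : ∀ t : ℝ,
      {x ∈ univ | ENNReal.ofReal t < liminf (fun m => f m x) atTop} = ⋃ N, A N t := by
    intro t
    ext x
    simp only [hA, mem_setOf_eq, mem_iUnion, mem_univ, true_and]
    rw [liminf_eq_iSup_iInf_of_nat, lt_iSup_iff]
  -- integrand measurable & monotone
  have hanti : ∀ N, Antitone fun t : ℝ => hCont n β (A N t) := by
    intro N s t hst
    refine hCont_mono fun x hx => ?_
    exact ⟨hx.1, lt_of_le_of_lt (ENNReal.ofReal_le_ofReal hst) hx.2⟩
  have hmeas : ∀ N, Measurable fun t : ℝ => hCont n β (A N t) := fun N =>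
    (hanti N).measurable
  calc choqE n β univ (fun x => liminf (fun m => f m x) atTop)
      ≤ ∫⁻ t in Ioi (0:ℝ), ⨆ N, hCont n β (A N t) := by
        rw [choqE]
        refine lintegral_mono fun t => ?_
        rw [hset t]
        exact hCont_iUnion_le hβ0 _ (hAmono t)
  _ = ⨆ N, ∫⁻ t in Ioi (0:ℝ), hCont n β (A N t) := by
        refine lintegral_iSup hmeas ?_
        intro N N' h t
        exact hCont_mono (hAmono t h)
  _ = ⨆ N, choqE n β univ (G N) := rfl
  _ ≤ liminf (fun m => choqE n β univ (f m)) atTop := by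
        rw [liminf_eq_iSup_iInf_of_nat]
        refine iSup_mono fun N => ?_
        refine le_iInf₂ fun m hm => ?_
        exact choqE_mono fun x => iInf₂_le m hm

end CF

/-- Fatou's lemma for Choquet integrals w.r.t. Hausdorff content:
∫ liminf f_m dH^β_∞ ≤ liminf ∫ f_m dH^β_∞. -/
theorem choquet_fatou (n : ℕ) (β : ℝ) (hβ0 : 0 < β) (hβn : β ≤ (n : ℝ))
    (f : ℕ → Rn n → ℝ≥0∞) :
    choqE n β univ (fun x => liminf (fun m => f m x) atTop)
      ≤ liminf (fun m => choqE n β univ (f m)) atTop :=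
  CF.choquet_fatou' n β hβ0 f
end
end

section
/- (Hölder's inequality for Choquet integrals) Let $0 < \beta \le n$, $1 < q < \infty$ with conjugate exponent $q'$, and let $f, g$ be nonnegative functions on a set $E \subseteq \mathbb{R}^n$. Then $\int_E f g\, d\mathcal{H}^\beta_\infty \le 2 \big(\int_E f^q\, d\mathcal{H}^\beta_\infty\big)^{1/q} \big(\int_E g^{q'}\, d\mathcal{H}^\beta_\infty\big)^{1/q'}$. In particular, for a cube $Q$ of side length $l(Q)$ and $f \ge 0$, $\int_Q f\, d\mathcal{H}^\beta_\infty \le C\, l(Q)^{\beta/q'} \big(\int_Q f^q\, d\mathcal{H}^\beta_\infty\big)^{1/q}$. -/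
open MeasureTheory Metric Set Filter
open scoped ENNReal NNReal Topology

noncomputable section

/-! ### Auxiliary lemmas for Choquet–Hölder -/

section ChoquetAux

variable {n : ℕ} {β : ℝ}

lemma hCont_le_of_cover (E : Set (Rn n)) (x : ℕ → Rn n) (r : ℕ → ℝ)
    (h : E ⊆ ⋃ i, ball (x i) (r i)) :
    hCont n β E ≤ ∑' i, ENNReal.ofReal (omegaC β * r i ^ β) :=
  iInf_le_of_le x (iInf_le_of_le r (iInf_le _ h))

lemma hCont_mono {A B : Set (Rn n)} (h : A ⊆ B) : hCont n β A ≤ hCont n β B := by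
  refine le_iInf fun x => le_iInf fun r => le_iInf fun hc => ?_
  exact hCont_le_of_cover A x r (h.trans hc)

lemma hCont_empty (hβ : β ≠ 0) : hCont n β (∅ : Set (Rn n)) = 0 := by
  refine le_antisymm ?_ zero_le
  have h := hCont_le_of_cover (β := β) (∅ : Set (Rn n)) (fun _ => 0) (fun _ => 0)
    (Set.empty_subset _)
  simpa [Real.zero_rpow hβ] using h

lemma hCont_iUnion_le (A : ℕ → Set (Rn n)) :
    hCont n β (⋃ k, A k) ≤ ∑' k, hCont n β (A k) := by
  refine ENNReal.le_of_forall_pos_le_add fun ε hε hfin => ?_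
  obtain ⟨δ, hδpos, hδsum⟩ :=
    ENNReal.exists_pos_sum_of_countable' (ε := (ε : ℝ≥0∞)) (by exact_mod_cast hε.ne') ℕ
  have key : ∀ k, ∃ x : ℕ → Rn n, ∃ r : ℕ → ℝ, (A k ⊆ ⋃ i, ball (x i) (r i)) ∧
      ∑' i, ENNReal.ofReal (omegaC β * r i ^ β) ≤ hCont n β (A k) + δ k := by
    intro k
    have hne : hCont n β (A k) ≠ ∞ := (lt_of_le_of_lt (ENNReal.le_tsum k) hfin).ne
    have hlt : hCont n β (A k) < hCont n β (A k) + δ k :=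
      ENNReal.lt_add_right hne (hδpos k).ne'
    conv_lhs at hlt => rw [hCont]
    simp only [iInf_lt_iff] at hlt
    obtain ⟨x, r, hcov, hlt⟩ := hlt
    exact ⟨x, r, hcov, hlt.le⟩
  choose x r hcov hsum using key
  set e : ℕ ≃ ℕ × ℕ := (Denumerable.eqv (ℕ × ℕ)).symm with he
  have hcover : (⋃ k, A k) ⊆ ⋃ m, ball (x (e m).1 (e m).2) (r (e m).1 (e m).2) := by
    intro y hy
    obtain ⟨k, hk⟩ := Set.mem_iUnion.mp hy
    obtain ⟨i, hi⟩ := Set.mem_iUnion.mp (hcov k hk)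
    refine Set.mem_iUnion.mpr ⟨e.symm (k, i), ?_⟩
    simpa using hi
  refine (hCont_le_of_cover _ _ _ hcover).trans ?_
  have h1 : ∑' m, ENNReal.ofReal (omegaC β * r (e m).1 (e m).2 ^ β)
      = ∑' p : ℕ × ℕ, ENNReal.ofReal (omegaC β * r p.1 p.2 ^ β) :=
    e.tsum_eq (fun p : ℕ × ℕ => ENNReal.ofReal (omegaC β * r p.1 p.2 ^ β))
  rw [h1, ENNReal.tsum_prod']
  calc ∑' k, ∑' i, ENNReal.ofReal (omegaC β * r k i ^ β)
      ≤ ∑' k, (hCont n β (A k) + δ k) := ENNReal.tsum_le_tsum hsum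
    _ = (∑' k, hCont n β (A k)) + ∑' k, δ k := ENNReal.tsum_add
    _ ≤ (∑' k, hCont n β (A k)) + ε := add_le_add_right hδsum.le _

lemma hCont_union_le (hβ : 0 < β) (A B : Set (Rn n)) :
    hCont n β (A ∪ B) ≤ hCont n β A + hCont n β B := by
  set C : ℕ → Set (Rn n) := fun k => if k = 0 then A else if k = 1 then B else ∅ with hC
  have h1 : A ∪ B ⊆ ⋃ k, C k := by
    rintro y (hy | hy)
    · exact Set.mem_iUnion.mpr ⟨0, by simp [hC, hy]⟩
    · exact Set.mem_iUnion.mpr ⟨1, by simp [hC, hy]⟩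
  have h2 : ∑' k, hCont n β (C k) = hCont n β A + hCont n β B := by
    rw [tsum_eq_sum (s := {0, 1}) (f := fun k => hCont n β (C k)) (fun k hk => ?_)]
    · rw [Finset.sum_insert (by decide), Finset.sum_singleton]
      simp [hC]
    · have hk0 : k ≠ 0 := by rintro rfl; simp at hk
      have hk1 : k ≠ 1 := by rintro rfl; simp at hk
      simp [hC, hk0, hk1, hCont_empty hβ.ne']
  calc hCont n β (A ∪ B) ≤ hCont n β (⋃ k, C k) := hCont_mono h1
    _ ≤ ∑' k, hCont n β (C k) := hCont_iUnion_le C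
    _ = _ := h2

lemma hCont_level_antitone (E : Set (Rn n)) (f : Rn n → ℝ≥0∞) :
    Antitone (fun t : ℝ => hCont n β {x ∈ E | ENNReal.ofReal t < f x}) := by
  intro s t hst
  exact hCont_mono fun x hx =>
    ⟨hx.1, lt_of_le_of_lt (ENNReal.ofReal_le_ofReal hst) hx.2⟩

lemma lintegral_Ioi_comp_mul_left (F : ℝ → ℝ≥0∞) {c : ℝ} (hc : 0 < c) :
    ∫⁻ t in Ioi (0 : ℝ), F (c * t) = ENNReal.ofReal c⁻¹ * ∫⁻ t in Ioi (0 : ℝ), F t := by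
  have hme : MeasurableEmbedding (fun t : ℝ => c * t) :=
    (Homeomorph.mulLeft₀ c hc.ne').measurableEmbedding
  have hpre : (fun t : ℝ => c * t) ⁻¹' (Ioi (0 : ℝ)) = Ioi 0 := by
    ext t
    simp only [Set.mem_preimage, Set.mem_Ioi]
    exact mul_pos_iff_of_pos_left hc
  have hmap : Measure.map (fun t : ℝ => c * t) (volume.restrict (Ioi (0 : ℝ)))
      = ENNReal.ofReal c⁻¹ • volume.restrict (Ioi (0 : ℝ)) := by
    conv_lhs => rw [← hpre]
    rw [← hme.restrict_map volume (Ioi (0 : ℝ)), Real.map_volume_mul_left hc.ne',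
      abs_of_pos (inv_pos.mpr hc), Measure.restrict_smul]
  calc ∫⁻ t in Ioi (0 : ℝ), F (c * t)
      = ∫⁻ s, F s ∂(Measure.map (fun t : ℝ => c * t) (volume.restrict (Ioi (0 : ℝ)))) :=
        (hme.lintegral_map F).symm
    _ = ENNReal.ofReal c⁻¹ * ∫⁻ t in Ioi (0 : ℝ), F t := by
        rw [hmap, lintegral_smul_measure, smul_eq_mul]

lemma choqE_smul (E : Set (Rn n)) (f : Rn n → ℝ≥0∞) {c : ℝ} (hc : 0 < c) :
    choqE n β E (fun x => ENNReal.ofReal c * f x) = ENNReal.ofReal c * choqE n β E f := by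
  have hset : ∀ t : ℝ, {x ∈ E | ENNReal.ofReal t < ENNReal.ofReal c * f x}
      = {x ∈ E | ENNReal.ofReal (c⁻¹ * t) < f x} := by
    intro t
    ext y
    simp only [Set.mem_setOf_eq, and_congr_right_iff]
    intro _
    have ha0 : ENNReal.ofReal c ≠ 0 := by
      simp only [ne_eq, ENNReal.ofReal_eq_zero, not_le]; exact hc
    have hat : ENNReal.ofReal c ≠ ∞ := ENNReal.ofReal_ne_top
    rw [ENNReal.ofReal_mul (inv_pos.mpr hc).le, ENNReal.ofReal_inv_of_pos hc]
    constructor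
    · intro h
      rw [← ENNReal.mul_lt_mul_iff_right ha0 hat, ← mul_assoc,
        ENNReal.mul_inv_cancel ha0 hat, one_mul]
      exact h
    · intro h
      have h2 := (ENNReal.mul_lt_mul_iff_right ha0 hat).mpr h
      rwa [← mul_assoc, ENNReal.mul_inv_cancel ha0 hat, one_mul] at h2
  have := lintegral_Ioi_comp_mul_left
    (fun s => hCont n β {x ∈ E | ENNReal.ofReal s < f x}) (inv_pos.mpr hc)
  simp only [choqE, hset]
  calc ∫⁻ t in Ioi (0 : ℝ), hCont n β {x ∈ E | ENNReal.ofReal (c⁻¹ * t) < f x}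
      = ENNReal.ofReal (c⁻¹)⁻¹ * ∫⁻ t in Ioi (0 : ℝ), hCont n β {x ∈ E | ENNReal.ofReal t < f x} :=
        this
    _ = _ := by rw [inv_inv]

lemma choqE_mul_le_add (hβ : 0 < β) (E : Set (Rn n)) (f g : Rn n → ℝ≥0∞)
    {q q' : ℝ} (hq0 : 0 < q) (hq'0 : 0 < q') (hsum : 1 / q + 1 / q' = 1) :
    choqE n β E (fun x => f x * g x)
      ≤ choqE n β E (fun x => f x ^ q) + choqE n β E (fun x => g x ^ q') := by
  have key : ∀ (T a b : ℝ≥0∞), T ≠ ∞ → T < a * b → T < a ^ q ∨ T < b ^ q' := by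
    intro T a b hT hab
    by_contra hcon
    push_neg at hcon
    obtain ⟨h1, h2⟩ := hcon
    rcases eq_or_ne T 0 with rfl | hT0
    · have ha : a = 0 := by
        have h0 : a ^ q = 0 := le_antisymm h1 zero_le
        rcases ENNReal.rpow_eq_zero_iff.mp h0 with ⟨h, _⟩ | ⟨_, h⟩
        · exact h
        · linarith
      simp [ha] at hab
    · have ha : a ≤ T ^ (1 / q) := by
        have h := ENNReal.rpow_le_rpow h1 (le_of_lt (by positivity : (0:ℝ) < 1 / q))
        rwa [← ENNReal.rpow_mul, mul_one_div, div_self hq0.ne', ENNReal.rpow_one] at h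
      have hb : b ≤ T ^ (1 / q') := by
        have h := ENNReal.rpow_le_rpow h2 (le_of_lt (by positivity : (0:ℝ) < 1 / q'))
        rwa [← ENNReal.rpow_mul, mul_one_div, div_self hq'0.ne', ENNReal.rpow_one] at h
      have : a * b ≤ T := by
        calc a * b ≤ T ^ (1 / q) * T ^ (1 / q') := mul_le_mul' ha hb
          _ = T ^ (1 / q + 1 / q') := (ENNReal.rpow_add _ _ hT0 hT).symm
          _ = T := by rw [hsum, ENNReal.rpow_one]
      exact absurd hab (not_lt.mpr this)
  have hpt : ∀ t : ℝ, {x ∈ E | ENNReal.ofReal t < f x * g x} ⊆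
      {x ∈ E | ENNReal.ofReal t < f x ^ q} ∪ {x ∈ E | ENNReal.ofReal t < g x ^ q'} := by
    intro t y hy
    rcases key (ENNReal.ofReal t) (f y) (g y) ENNReal.ofReal_ne_top hy.2 with h | h
    · exact Or.inl ⟨hy.1, h⟩
    · exact Or.inr ⟨hy.1, h⟩
  calc choqE n β E (fun x => f x * g x)
      ≤ ∫⁻ t in Ioi (0 : ℝ), (hCont n β {x ∈ E | ENNReal.ofReal t < f x ^ q}
          + hCont n β {x ∈ E | ENNReal.ofReal t < g x ^ q'}) :=
        lintegral_mono fun t => (hCont_mono (hpt t)).trans (hCont_union_le hβ _ _)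
    _ = _ := lintegral_add_left (hCont_level_antitone E (fun x => f x ^ q)).measurable _

lemma choqE_mul_eq_zero (hβ : 0 < β) (E : Set (Rn n)) (f g : Rn n → ℝ≥0∞)
    {p : ℝ} (hp : 0 < p) (h0 : choqE n β E (fun x => f x ^ p) = 0) :
    choqE n β E (fun x => f x * g x) = 0 := by
  have hmeas := (hCont_level_antitone (n := n) (β := β) E (fun x => f x ^ p)).measurable
  have hae : (fun t => hCont n β {x ∈ E | ENNReal.ofReal t < f x ^ p})
      =ᵐ[volume.restrict (Ioi (0:ℝ))] 0 := (lintegral_eq_zero_iff hmeas).mp h0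
  have hall : ∀ t : ℝ, 0 < t → hCont n β {x ∈ E | ENNReal.ofReal t < f x ^ p} = 0 := by
    intro t ht
    by_contra hne
    have hsub : Ioc (0:ℝ) t ⊆
        {s : ℝ | ¬ hCont n β {x ∈ E | ENNReal.ofReal s < f x ^ p} = 0} ∩ Ioi 0 := by
      intro s hs
      refine ⟨fun h0s => hne ?_, hs.1⟩
      exact le_antisymm ((hCont_level_antitone E (fun x => f x ^ p) hs.2).trans h0s.le)
        zero_le
    have hnull : volume.restrict (Ioi (0:ℝ))
        {s : ℝ | ¬ hCont n β {x ∈ E | ENNReal.ofReal s < f x ^ p} = 0} = 0 := by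
      have := hae
      rw [Filter.EventuallyEq, ae_iff] at this
      simpa using this
    rw [Measure.restrict_apply' measurableSet_Ioi] at hnull
    have := measure_mono_null hsub hnull
    rw [Real.volume_Ioc] at this
    simp only [sub_zero] at this
    exact absurd this (by simp [ht])
  have hzero : ∀ t : ℝ, hCont n β {x ∈ E | ENNReal.ofReal t < f x * g x} = 0 := by
    intro t
    refine le_antisymm ?_ zero_le
    have hsub : {x ∈ E | ENNReal.ofReal t < f x * g x} ⊆
        ⋃ k : ℕ, {x ∈ E | ENNReal.ofReal (1 / ((k : ℝ) + 1)) < f x ^ p} := by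
      intro y hy
      have hylt : ENNReal.ofReal t < f y * g y := hy.2
      have hf0 : f y ^ p ≠ 0 := by
        intro h
        rcases ENNReal.rpow_eq_zero_iff.mp h with ⟨h1, _⟩ | ⟨_, h2⟩
        · rw [h1, zero_mul] at hylt
          exact absurd hylt (by simp)
        · linarith
      obtain ⟨m, hm⟩ := ENNReal.exists_inv_nat_lt hf0
      refine Set.mem_iUnion.mpr ⟨m, hy.1, lt_of_le_of_lt ?_ hm⟩
      rw [one_div, ENNReal.ofReal_inv_of_pos (by positivity)]
      refine ENNReal.inv_le_inv' ?_
      rw [← ENNReal.ofReal_natCast m]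
      exact ENNReal.ofReal_le_ofReal (by linarith)
    refine (hCont_mono hsub).trans ?_
    refine (hCont_iUnion_le _).trans ?_
    rw [tsum_congr (fun k : ℕ => hall (1 / ((k : ℝ) + 1)) (by positivity))]
    simp
  simp only [choqE, hzero]
  simp

lemma hCont_cube_le (hβ : 0 < β) (hn : 1 ≤ n) (z : Rn n) {l : ℝ} (hl : 0 < l) :
    hCont n β (cube z l) ≤ ENNReal.ofReal (omegaC β * (Real.sqrt n * l) ^ β) := by
  have hn0 : (0:ℝ) < n := by exact_mod_cast hn
  have hsub : cube z l ⊆ ball z (Real.sqrt n * l) := by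
    intro x hx
    rw [mem_ball, EuclideanSpace.dist_eq]
    have h1 : ∑ i, dist (x i) (z i) ^ 2 ≤ (n : ℝ) * (l / 2) ^ 2 := by
      calc ∑ i, dist (x i) (z i) ^ 2 ≤ ∑ _i : Fin n, (l / 2) ^ 2 := by
            refine Finset.sum_le_sum fun i _ => ?_
            rw [Real.dist_eq]
            exact pow_le_pow_left₀ (abs_nonneg _) (hx i).le 2
        _ = (n : ℝ) * (l / 2) ^ 2 := by
            rw [Finset.sum_const, Finset.card_univ, Fintype.card_fin, nsmul_eq_mul]
    calc Real.sqrt (∑ i, dist (x i) (z i) ^ 2)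
        ≤ Real.sqrt ((n : ℝ) * (l / 2) ^ 2) := Real.sqrt_le_sqrt h1
      _ = Real.sqrt n * (l / 2) := by
          rw [Real.sqrt_mul (le_of_lt hn0), Real.sqrt_sq (by positivity)]
      _ < Real.sqrt n * l := by
          exact mul_lt_mul_of_pos_left (by linarith) (Real.sqrt_pos.mpr hn0)
  have hcov : cube z l ⊆ ⋃ i : ℕ, ball z (if i = 0 then Real.sqrt n * l else 0) := by
    intro y hy
    exact Set.mem_iUnion.mpr ⟨0, by simpa using hsub hy⟩
  refine (hCont_le_of_cover _ (fun _ => z) _ hcov).trans ?_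
  rw [tsum_eq_single 0 (fun k hk => ?_)]
  · simp
  · simp [hk, Real.zero_rpow hβ.ne']

lemma choqE_one_le (hβ : 0 < β) (E : Set (Rn n)) {M : ℝ≥0∞} (hE : hCont n β E ≤ M) :
    choqE n β E (fun _ => (1 : ℝ≥0∞)) ≤ M := by
  have hpt : ∀ t : ℝ, hCont n β {x ∈ E | ENNReal.ofReal t < 1}
      ≤ (Iio (1:ℝ)).indicator (fun _ => M) t := by
    intro t
    by_cases ht : t < 1
    · rw [Set.indicator_of_mem (Set.mem_Iio.mpr ht)]
      exact (hCont_mono (Set.sep_subset _ _)).trans hE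
    · rw [Set.indicator_of_notMem (by simpa using ht)]
      have hemp : {x ∈ E | ENNReal.ofReal t < 1} = (∅ : Set (Rn n)) := by
        ext y
        simp only [Set.mem_setOf_eq, Set.mem_empty_iff_false, iff_false, not_and]
        intro _
        have h1 : (1 : ℝ≥0∞) ≤ ENNReal.ofReal t := by
          rw [← ENNReal.ofReal_one]
          exact ENNReal.ofReal_le_ofReal (not_lt.mp ht)
        exact not_lt.mpr h1
      rw [hemp, hCont_empty hβ.ne']
  refine (lintegral_mono hpt).trans ?_
  rw [lintegral_indicator measurableSet_Iio, setLIntegral_const,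
    Measure.restrict_apply measurableSet_Iio, Set.Iio_inter_Ioi, Real.volume_Ioo]
  simp

end ChoquetAux

/-- Hölder's inequality for Choquet integrals:
∫_E fg dH^β_∞ ≤ 2 (∫_E f^q dH^β_∞)^{1/q} (∫_E g^{q'} dH^β_∞)^{1/q'}, and in
particular ∫_Q f dH^β_∞ ≤ C l(Q)^{β/q'} (∫_Q f^q dH^β_∞)^{1/q} for cubes Q. -/
theorem choquet_holder (n : ℕ) (β : ℝ) (hβ0 : 0 < β) (hβn : β ≤ (n : ℝ))
    (q q' : ℝ) (hq : 1 < q) (hq' : 1 / q + 1 / q' = 1) :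
    (∀ (E : Set (Rn n)) (f g : Rn n → ℝ≥0∞),
      choqE n β E (fun x => f x * g x)
        ≤ 2 * (choqE n β E (fun x => f x ^ q)) ^ (1 / q)
            * (choqE n β E (fun x => g x ^ q')) ^ (1 / q')) ∧
    ∃ C : ℝ, 0 < C ∧ ∀ (z : Rn n) (l : ℝ), 0 < l → ∀ f : Rn n → ℝ≥0∞,
      choqE n β (cube z l) f
        ≤ ENNReal.ofReal (C * l ^ (β / q'))
            * (choqE n β (cube z l) (fun x => f x ^ q)) ^ (1 / q) := by
  have hq0 : 0 < q := lt_trans one_pos hq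
  have h1q : 1 / q < 1 := by rw [div_lt_one hq0]; exact hq
  have h1q0 : 0 < 1 / q := by positivity
  have hq'inv : 0 < 1 / q' := by linarith
  have hq'0 : 0 < q' := one_div_pos.mp hq'inv
  have hn1 : 1 ≤ n := by
    have h : (0 : ℝ) < n := lt_of_lt_of_le hβ0 hβn
    have h' : 0 < n := by exact_mod_cast h
    omega
  have main : ∀ (E : Set (Rn n)) (f g : Rn n → ℝ≥0∞),
      choqE n β E (fun x => f x * g x)
        ≤ 2 * (choqE n β E (fun x => f x ^ q)) ^ (1 / q)
            * (choqE n β E (fun x => g x ^ q')) ^ (1 / q') := by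
    intro E f g
    rcases eq_or_ne (choqE n β E (fun x => f x ^ q)) 0 with hA0 | hA0
    · rw [choqE_mul_eq_zero hβ0 E f g hq0 hA0]
      exact zero_le
    rcases eq_or_ne (choqE n β E (fun x => g x ^ q')) 0 with hB0 | hB0
    · have hcomm : (fun x => f x * g x) = fun x => g x * f x := by
        funext x; exact mul_comm _ _
      rw [hcomm, choqE_mul_eq_zero hβ0 E g f hq'0 hB0]
      exact zero_le
    rcases eq_or_ne (choqE n β E (fun x => f x ^ q)) ∞ with hAt | hAt
    · have hBne : (choqE n β E (fun x => g x ^ q')) ^ (1 / q') ≠ 0 := by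
        intro h
        rcases ENNReal.rpow_eq_zero_iff.mp h with ⟨h1, _⟩ | ⟨_, h2⟩
        · exact hB0 h1
        · linarith
      have htop : 2 * (choqE n β E (fun x => f x ^ q)) ^ (1 / q)
          * (choqE n β E (fun x => g x ^ q')) ^ (1 / q') = ∞ := by
        rw [hAt, ENNReal.top_rpow_of_pos h1q0, ENNReal.mul_top (by norm_num),
          ENNReal.top_mul hBne]
      exact htop ▸ le_top
    rcases eq_or_ne (choqE n β E (fun x => g x ^ q')) ∞ with hBt | hBt
    · have hAne : 2 * (choqE n β E (fun x => f x ^ q)) ^ (1 / q) ≠ 0 := by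
        refine mul_ne_zero (by norm_num) ?_
        intro h
        rcases ENNReal.rpow_eq_zero_iff.mp h with ⟨h1, _⟩ | ⟨_, h2⟩
        · exact hA0 h1
        · linarith
      have htop : 2 * (choqE n β E (fun x => f x ^ q)) ^ (1 / q)
          * (choqE n β E (fun x => g x ^ q')) ^ (1 / q') = ∞ := by
        rw [hBt, ENNReal.top_rpow_of_pos hq'inv, ENNReal.mul_top hAne]
      exact htop ▸ le_top
    -- main case: both finite and nonzero
    have hqq' : q + q' = q * q' := by
      have h := hq'
      field_simp at h
      linarith
    have ha0 : (0 : ℝ) < (choqE n β E (fun x => f x ^ q)).toReal :=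
      ENNReal.toReal_pos hA0 hAt
    have hb0 : (0 : ℝ) < (choqE n β E (fun x => g x ^ q')).toReal :=
      ENNReal.toReal_pos hB0 hBt
    set a : ℝ := (choqE n β E (fun x => f x ^ q)).toReal with hadef
    set b : ℝ := (choqE n β E (fun x => g x ^ q')).toReal with hbdef
    have hba : 0 < b / a := div_pos hb0 ha0
    set c : ℝ := (b / a) ^ ((1 : ℝ) / (q + q')) with hcdef
    have hc : 0 < c := Real.rpow_pos_of_pos hba _
    have hqsum : 0 < q + q' := by linarith
    have hsq : (1 / (q + q')) * q = 1 / q' := by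
      rw [hqq']; field_simp
    have hsq' : (1 / (q + q')) * q' = 1 / q := by
      rw [hqq']; field_simp
    have hAa : a ^ (1 / q) * a ^ (1 / q') = a := by
      rw [← Real.rpow_add ha0, hq', Real.rpow_one]
    have hBb : b ^ (1 / q) * b ^ (1 / q') = b := by
      rw [← Real.rpow_add hb0, hq', Real.rpow_one]
    have hcq : c ^ q = b ^ (1 / q') / a ^ (1 / q') := by
      rw [hcdef, ← Real.rpow_mul hba.le, hsq, Real.div_rpow hb0.le ha0.le]
    have hcq' : c⁻¹ ^ q' = a ^ (1 / q) / b ^ (1 / q) := by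
      rw [hcdef, ← Real.inv_rpow hba.le, inv_div,
        ← Real.rpow_mul (by positivity : (0 : ℝ) ≤ a / b), hsq',
        Real.div_rpow ha0.le hb0.le]
    have e1 : c ^ q * a = a ^ (1 / q) * b ^ (1 / q') := by
      rw [hcq, div_mul_eq_mul_div, div_eq_iff (Real.rpow_pos_of_pos ha0 _).ne']
      linear_combination (-(b ^ (1 / q'))) * hAa
    have e2 : c⁻¹ ^ q' * b = a ^ (1 / q) * b ^ (1 / q') := by
      rw [hcq', div_mul_eq_mul_div, div_eq_iff (Real.rpow_pos_of_pos hb0 _).ne']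
      linear_combination (-(a ^ (1 / q))) * hBb
    have key : choqE n β E (fun x => f x * g x)
        ≤ ENNReal.ofReal (c ^ q) * choqE n β E (fun x => f x ^ q)
          + ENNReal.ofReal (c⁻¹ ^ q') * choqE n β E (fun x => g x ^ q') := by
      have hfg : (fun x => f x * g x)
          = fun x => (ENNReal.ofReal c * f x) * (ENNReal.ofReal c⁻¹ * g x) := by
        funext x
        rw [mul_mul_mul_comm, ← ENNReal.ofReal_mul hc.le, mul_inv_cancel₀ hc.ne',
          ENNReal.ofReal_one, one_mul]
      rw [hfg]
      refine (choqE_mul_le_add hβ0 E _ _ hq0 hq'0 hq').trans ?_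
      have h1 : (fun x => (ENNReal.ofReal c * f x) ^ q)
          = fun x => ENNReal.ofReal (c ^ q) * f x ^ q := by
        funext x
        rw [ENNReal.mul_rpow_of_nonneg _ _ hq0.le, ENNReal.ofReal_rpow_of_pos hc]
      have h2 : (fun x => (ENNReal.ofReal c⁻¹ * g x) ^ q')
          = fun x => ENNReal.ofReal (c⁻¹ ^ q') * g x ^ q' := by
        funext x
        rw [ENNReal.mul_rpow_of_nonneg _ _ hq'0.le,
          ENNReal.ofReal_rpow_of_pos (inv_pos.mpr hc)]
      rw [h1, h2, choqE_smul E (fun x => f x ^ q) (Real.rpow_pos_of_pos hc q),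
        choqE_smul E (fun x => g x ^ q') (Real.rpow_pos_of_pos (inv_pos.mpr hc) q')]
    refine key.trans ?_
    have hAof : choqE n β E (fun x => f x ^ q) = ENNReal.ofReal a :=
      (ENNReal.ofReal_toReal hAt).symm
    have hBof : choqE n β E (fun x => g x ^ q') = ENNReal.ofReal b :=
      (ENNReal.ofReal_toReal hBt).symm
    rw [hAof, hBof, ← ENNReal.ofReal_mul (by positivity), ← ENNReal.ofReal_mul (by positivity),
      e1, e2, ← two_mul, ENNReal.ofReal_rpow_of_pos ha0, ENNReal.ofReal_rpow_of_pos hb0,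
      mul_assoc, ← ENNReal.ofReal_mul (by positivity)]
  refine ⟨main, ?_⟩
  have hω : 0 < omegaC β :=
    div_pos (Real.rpow_pos_of_pos Real.pi_pos _) (Real.Gamma_pos_of_pos (by linarith))
  have hn0 : (0 : ℝ) < n := lt_of_lt_of_le hβ0 hβn
  have hK : 0 < omegaC β * Real.sqrt n ^ β :=
    mul_pos hω (Real.rpow_pos_of_pos (Real.sqrt_pos.mpr hn0) β)
  refine ⟨2 * (omegaC β * Real.sqrt n ^ β) ^ ((1 : ℝ) / q'), by positivity, ?_⟩
  intro z l hl f
  have h := main (cube z l) f (fun _ => 1)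
  simp only [mul_one, ENNReal.one_rpow] at h
  refine h.trans ?_
  have hone : choqE n β (cube z l) (fun _ => (1 : ℝ≥0∞))
      ≤ ENNReal.ofReal ((omegaC β * Real.sqrt n ^ β) * l ^ β) := by
    refine choqE_one_le hβ0 _ ((hCont_cube_le hβ0 hn1 z hl).trans_eq ?_)
    congr 1
    rw [Real.mul_rpow (Real.sqrt_nonneg _) hl.le, ← mul_assoc]
  have h2 : (choqE n β (cube z l) (fun _ => (1 : ℝ≥0∞))) ^ (1 / q')
      ≤ ENNReal.ofReal (((omegaC β * Real.sqrt n ^ β) * l ^ β) ^ ((1 : ℝ) / q')) := by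
    refine le_trans (ENNReal.rpow_le_rpow hone hq'inv.le) ?_
    rw [ENNReal.ofReal_rpow_of_pos (by positivity)]
  calc 2 * (choqE n β (cube z l) (fun x => f x ^ q)) ^ (1 / q)
        * (choqE n β (cube z l) (fun _ => (1 : ℝ≥0∞))) ^ (1 / q')
      ≤ 2 * (choqE n β (cube z l) (fun x => f x ^ q)) ^ (1 / q)
        * ENNReal.ofReal (((omegaC β * Real.sqrt n ^ β) * l ^ β) ^ ((1 : ℝ) / q')) :=
        mul_le_mul_right h2 _
    _ = ENNReal.ofReal (2 * (omegaC β * Real.sqrt n ^ β) ^ ((1 : ℝ) / q') * l ^ (β / q'))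
        * (choqE n β (cube z l) (fun x => f x ^ q)) ^ (1 / q) := by
        rw [mul_right_comm]
        congr 1
        rw [Real.mul_rpow hK.le (Real.rpow_nonneg hl.le β), ← Real.rpow_mul hl.le,
          mul_one_div, mul_assoc (2 : ℝ), ENNReal.ofReal_mul (by norm_num : (0:ℝ) ≤ 2),
          ENNReal.ofReal_ofNat]
end
end
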